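/- arXiv:1902.09837 — 4 statements merged into one kernel-verified Lean document; each statement's English description precedes it below -/
import Mathlib

section
/- There exists a radial weight W in M that does not belong to Ď; hence Ď is a proper subclass of M. Concretely, let ω̂(r) = exp(−exp(1/(1−r))), t_n = 1 − 2^{−2^n}, s_n = 1 − 1/(n·2^{2^n}), and W(r) = ω(r)·Σ_{n≥2} χ_{[s_n, t_{n+1}]}(r); then W ∈ M but W ∉ Ď. -/
open MeasureTheory Set

/-- Tail integral of a radial weight. -/
noncomputable def tailInt (ω : ℝ → ℝ) (r : ℝ) : ℝ := ∫ s in Set.Ioo r 1, ω s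

/-- Moment of a radial weight: `ω_x = ∫_0^1 r^x ω(r) dr`. -/
noncomputable def mom (ω : ℝ → ℝ) (x : ℝ) : ℝ := ∫ r in Set.Ioo (0:ℝ) 1, r ^ x * ω r

/-- The class M of radial weights. -/
def memM (ω : ℝ → ℝ) : Prop :=
  ∃ C > (1:ℝ), ∃ K > (1:ℝ), ∀ x : ℝ, 1 ≤ x → C * mom ω (K * x) ≤ mom ω x

/-- The class Ď of radial weights. -/
def memDd (ω : ℝ → ℝ) : Prop :=
  ∃ K > (1:ℝ), ∃ C > (1:ℝ), ∀ r ∈ Set.Ico (0:ℝ) 1,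
    C * tailInt ω (1 - (1 - r) / K) ≤ tailInt ω r

namespace WDD

/-- scales -/
noncomputable def uu (k : ℕ) : ℝ := (1/2 : ℝ) ^ k

lemma uu_pos (k : ℕ) : 0 < uu k := by unfold uu; positivity

lemma uu_le_one (k : ℕ) : uu k ≤ 1 := by
  unfold uu
  exact pow_le_one₀ (by norm_num) (by norm_num)

lemma uu_succ (k : ℕ) : uu (k+1) = uu k / 2 := by
  unfold uu; rw [pow_succ]; ring

lemma uu_anti : StrictAnti uu := fun m n h =>
  pow_lt_pow_right_of_lt_one₀ (by norm_num) (by norm_num) h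

lemma uu_le_half {k : ℕ} (hk : 1 ≤ k) : uu k ≤ 1/2 := by
  have := uu_anti.antitone hk
  simpa [uu] using this

lemma uu_mul (k : ℕ) : (2:ℝ)^k * uu k = 1 := by
  unfold uu
  rw [← mul_pow]
  norm_num

def isSq (k : ℕ) : Prop := 1 ≤ k ∧ Nat.sqrt k ^ 2 = k

instance : DecidablePred isSq := fun _ => instDecidableAnd

noncomputable def cc (k : ℕ) : ℝ := if isSq k then Real.exp (-(4:ℝ)^k) else 0

lemma cc_nonneg (k : ℕ) : 0 ≤ cc k := by
  unfold cc; split <;> positivity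

lemma cc_le (k : ℕ) : cc k ≤ Real.exp (-(4:ℝ)^k) := by
  unfold cc; split
  · exact le_refl _
  · positivity

noncomputable def BB (k : ℕ) : Set ℝ := Set.Ico (1 - uu k) (1 - uu (k+1))

lemma BB_meas (k : ℕ) : MeasurableSet (BB k) := measurableSet_Ico

lemma BB_unique {k j : ℕ} {r : ℝ} (hk : r ∈ BB k) (hj : r ∈ BB j) : k = j := by
  rcases hk with ⟨hk1, hk2⟩
  rcases hj with ⟨hj1, hj2⟩
  by_contra hne
  rcases Nat.lt_or_ge k j with h | h
  · have : 1 - uu j ≤ r := hj1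
    have h2 : uu j ≤ uu (k+1) := uu_anti.antitone h
    linarith [hk2, h2]
  · have h' : j < k := lt_of_le_of_ne h (Ne.symm hne)
    have h2 : uu k ≤ uu (j+1) := uu_anti.antitone h'
    linarith [hj2, hk1]

noncomputable def WW : ℝ → ℝ := fun r => ∑' k, (BB k).indicator (fun _ => cc k * 2^(k+1)) r

lemma WW_eq {k : ℕ} {r : ℝ} (hr : r ∈ BB k) : WW r = cc k * 2^(k+1) := by
  unfold WW
  rw [tsum_eq_single k]
  · simp [Set.indicator_of_mem hr]
  · intro j hj
    apply Set.indicator_of_notMem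
    intro hrj
    exact hj (BB_unique hrj hr)

lemma WW_zero {r : ℝ} (hr : ∀ k, r ∉ BB k) : WW r = 0 := by
  unfold WW
  have : ∀ k, (BB k).indicator (fun _ => cc k * 2^(k+1)) r = 0 := fun k =>
    Set.indicator_of_notMem (hr k) _
  simp [this]

end WDD

namespace WDD

lemma BB_cover {r : ℝ} (h0 : 0 ≤ r) (h1 : r < 1) : ∃ k, r ∈ BB k := by
  have hex : ∃ k : ℕ, uu (k+1) < 1 - r := by
    obtain ⟨N, hN⟩ := exists_pow_lt_of_lt_one (by linarith : (0:ℝ) < 1 - r)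
      (by norm_num : (1/2:ℝ) < 1)
    exact ⟨N, lt_of_le_of_lt (uu_anti.antitone (by omega : N ≤ N+1)) hN⟩
  classical
  let k := Nat.find hex
  refine ⟨k, ?_, ?_⟩
  · -- 1 - uu k ≤ r, i.e. 1 - r ≤ uu k
    rcases Nat.eq_zero_or_pos k with hk0 | hkpos
    · have : uu 0 = 1 := by simp [uu]
      rw [hk0, this]; linarith
    · have := Nat.find_min hex (m := k - 1) (by omega)
      push_neg at this
      have hkk : k - 1 + 1 = k := by omega
      rw [hkk] at this
      linarith
  · have := Nat.find_spec hex
    linarith [this]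

lemma two_pow_le_exp (k : ℕ) : (2:ℝ)^(k+1) ≤ Real.exp ((4:ℝ)^k) := by
  have h1 : ((k:ℝ) + 1) * Real.log 2 ≤ (4:ℝ)^k := by
    have hlog : Real.log 2 ≤ 1 := by
      have := Real.log_le_sub_one_of_pos (by norm_num : (0:ℝ) < 2)
      linarith
    have h2 : ((k:ℝ) + 1) ≤ (2:ℝ)^k := by
      have hn : (k + 1 : ℕ) ≤ 2^k := Nat.lt_two_pow_self (n := k)
      exact_mod_cast hn
    have h3 : (2:ℝ)^k ≤ (4:ℝ)^k := pow_le_pow_left₀ (by norm_num) (by norm_num) k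
    have hk0 : (0:ℝ) ≤ (k:ℝ) := Nat.cast_nonneg k
    nlinarith [Real.log_nonneg (by norm_num : (1:ℝ) ≤ 2)]
  calc (2:ℝ)^(k+1) = Real.exp (((k:ℝ)+1) * Real.log 2) := by
        rw [show ((k:ℝ)+1) * Real.log 2 = ((k+1 : ℕ):ℝ) * Real.log 2 by push_cast; ring,
          ← Real.log_pow, Real.exp_log (by positivity)]
    _ ≤ Real.exp ((4:ℝ)^k) := Real.exp_le_exp.mpr h1

lemma block_val_le_one (k : ℕ) : cc k * 2^(k+1) ≤ 1 := by
  have h1 : cc k ≤ Real.exp (-(4:ℝ)^k) := cc_le k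
  have h2 : Real.exp (-(4:ℝ)^k) * 2^(k+1) ≤ 1 := by
    rw [Real.exp_neg]
    rw [inv_mul_le_iff₀ (Real.exp_pos _)]
    simpa using two_pow_le_exp k
  calc cc k * 2^(k+1) ≤ Real.exp (-(4:ℝ)^k) * 2^(k+1) := by
        apply mul_le_mul_of_nonneg_right h1 (by positivity)
    _ ≤ 1 := h2

lemma WW_nonneg (r : ℝ) : 0 ≤ WW r := by
  by_cases h : ∃ k, r ∈ BB k
  · obtain ⟨k, hk⟩ := h
    rw [WW_eq hk]
    exact mul_nonneg (cc_nonneg k) (by positivity)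
  · push_neg at h
    rw [WW_zero h]

lemma WW_le_one (r : ℝ) : WW r ≤ 1 := by
  by_cases h : ∃ k, r ∈ BB k
  · obtain ⟨k, hk⟩ := h
    rw [WW_eq hk]
    exact block_val_le_one k
  · push_neg at h
    rw [WW_zero h]
    norm_num

lemma WW_meas : Measurable WW := by
  have hpart : ∀ N : ℕ, Measurable (fun r => ∑ k ∈ Finset.range N,
      (BB k).indicator (fun _ => cc k * 2^(k+1)) r) := by
    intro N
    apply Finset.measurable_sum
    intro k _
    exact (measurable_const.indicator (BB_meas k))
  apply measurable_of_tendsto_metrizable hpart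
  rw [tendsto_pi_nhds]
  intro r
  have hsumm : Summable (fun k => (BB k).indicator (fun _ => cc k * 2^(k+1)) r) := by
    by_cases h : ∃ k, r ∈ BB k
    · obtain ⟨k, hk⟩ := h
      apply summable_of_ne_finset_zero (s := {k})
      intro j hj
      simp only [Finset.mem_singleton] at hj
      exact Set.indicator_of_notMem (fun hrj => hj (BB_unique hrj hk)) _
    · push_neg at h
      apply summable_of_ne_finset_zero (s := ∅)
      intro j _
      exact Set.indicator_of_notMem (h j) _
  exact hsumm.hasSum.tendsto_sum_nat

end WDD

namespace WDD

lemma WW_intOn : IntegrableOn WW (Set.Ico (0:ℝ) 1) := by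
  apply Measure.integrableOn_of_bounded (M := 1)
  · rw [Real.volume_Ico]; exact ENNReal.ofReal_ne_top
  · exact WW_meas.aestronglyMeasurable
  · apply ae_of_all
    intro r
    rw [Real.norm_eq_abs, abs_of_nonneg (WW_nonneg r)]
    exact WW_le_one r

lemma gg_intOn {y : ℝ} (hy : 0 ≤ y) : IntegrableOn (fun r => r ^ y * WW r) (Set.Ioo (0:ℝ) 1) := by
  apply Measure.integrableOn_of_bounded (M := 1)
  · rw [Real.volume_Ioo]; exact ENNReal.ofReal_ne_top
  · exact (((Real.continuous_rpow_const hy).measurable).mul WW_meas).aestronglyMeasurable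
  · rw [ae_restrict_iff' measurableSet_Ioo]
    apply ae_of_all
    intro r hr
    rw [Real.norm_eq_abs, abs_of_nonneg (mul_nonneg (Real.rpow_nonneg hr.1.le y) (WW_nonneg r))]
    calc r ^ y * WW r ≤ 1 * 1 := by
          apply mul_le_mul (Real.rpow_le_one hr.1.le hr.2.le hy) (WW_le_one r) (WW_nonneg r)
          norm_num
      _ = 1 := by norm_num

lemma gg_nonneg {y : ℝ} (r : ℝ) (hr : r ∈ Set.Ioo (0:ℝ) 1) : 0 ≤ r ^ y * WW r :=
  mul_nonneg (Real.rpow_nonneg hr.1.le y) (WW_nonneg r)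

lemma BB_union_eq : (⋃ k, BB k ∩ Set.Ioo (0:ℝ) 1) = Set.Ioo (0:ℝ) 1 := by
  apply Set.Subset.antisymm
  · exact Set.iUnion_subset fun k => Set.inter_subset_right
  · intro r hr
    obtain ⟨k, hk⟩ := BB_cover hr.1.le hr.2
    exact Set.mem_iUnion.mpr ⟨k, hk, hr⟩

lemma BB_inter_disj : Pairwise (Function.onFun Disjoint (fun k => BB k ∩ Set.Ioo (0:ℝ) 1)) := by
  intro i j hij
  rw [Function.onFun, Set.disjoint_left]
  rintro r ⟨hri, -⟩ ⟨hrj, -⟩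
  exact hij (BB_unique hri hrj)

lemma mom_hasSum {y : ℝ} (hy : 0 ≤ y) :
    HasSum (fun k => ∫ r in BB k ∩ Set.Ioo (0:ℝ) 1, r ^ y * WW r) (mom WW y) := by
  have := MeasureTheory.hasSum_integral_iUnion (μ := volume)
    (s := fun k => BB k ∩ Set.Ioo (0:ℝ) 1)
    (f := fun r => r ^ y * WW r)
    (fun k => (BB_meas k).inter measurableSet_Ioo)
    BB_inter_disj
    (by rw [BB_union_eq]; exact gg_intOn hy)
  rw [BB_union_eq] at this
  exact this

lemma blockU {y : ℝ} (hy : 0 ≤ y) (k : ℕ) :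
    ∫ r in BB k ∩ Set.Ioo (0:ℝ) 1, r ^ y * WW r ≤ cc k * (1 - uu (k+1)) ^ y := by
  have hsub : BB k ∩ Set.Ioo (0:ℝ) 1 ⊆ Set.Ioo (0:ℝ) 1 := Set.inter_subset_right
  have hbase : (0:ℝ) ≤ 1 - uu (k+1) := by
    have := uu_le_half (k := k+1) (by omega)
    linarith
  have hint : IntegrableOn (fun r => r ^ y * WW r) (BB k ∩ Set.Ioo (0:ℝ) 1) :=
    (gg_intOn hy).mono_set hsub
  have hmono : ∀ r ∈ BB k ∩ Set.Ioo (0:ℝ) 1,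
      r ^ y * WW r ≤ (1 - uu (k+1)) ^ y * (cc k * 2^(k+1)) := by
    rintro r ⟨hrB, hrI⟩
    rw [WW_eq hrB]
    apply mul_le_mul_of_nonneg_right _ (mul_nonneg (cc_nonneg k) (by positivity))
    exact Real.rpow_le_rpow hrI.1.le hrB.2.le hy
  calc ∫ r in BB k ∩ Set.Ioo (0:ℝ) 1, r ^ y * WW r
      ≤ ∫ _ in BB k ∩ Set.Ioo (0:ℝ) 1, (1 - uu (k+1)) ^ y * (cc k * 2^(k+1)) := by
        apply setIntegral_mono_on hint ((integrableOn_const_iff).mpr _)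
          ((BB_meas k).inter measurableSet_Ioo) hmono
        right
        exact lt_of_le_of_lt (measure_mono hsub) (by rw [Real.volume_Ioo]; exact ENNReal.ofReal_lt_top)
    _ = (volume (BB k ∩ Set.Ioo (0:ℝ) 1)).toReal • ((1 - uu (k+1)) ^ y * (cc k * 2^(k+1))) :=
        setIntegral_const _
    _ ≤ uu (k+1) * ((1 - uu (k+1)) ^ y * (cc k * 2^(k+1))) := by
        apply mul_le_mul_of_nonneg_right _ (mul_nonneg (Real.rpow_nonneg hbase y)
          (mul_nonneg (cc_nonneg k) (by positivity)))
        have h1 : volume (BB k ∩ Set.Ioo (0:ℝ) 1) ≤ ENNReal.ofReal (uu (k+1)) := by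
          refine le_trans (measure_mono Set.inter_subset_left) ?_
          rw [BB, Real.volume_Ico]
          apply ENNReal.ofReal_le_ofReal
          have := uu_succ k
          linarith
        calc (volume (BB k ∩ Set.Ioo (0:ℝ) 1)).toReal
            ≤ (ENNReal.ofReal (uu (k+1))).toReal := ENNReal.toReal_mono ENNReal.ofReal_ne_top h1
          _ = uu (k+1) := ENNReal.toReal_ofReal (uu_pos (k+1)).le
    _ = cc k * (1 - uu (k+1)) ^ y * ((2:ℝ)^(k+1) * uu (k+1)) := by ring
    _ = cc k * (1 - uu (k+1)) ^ y := by rw [uu_mul (k+1)]; ring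

lemma blockL {y : ℝ} (hy : 0 ≤ y) {k : ℕ} (hk : 1 ≤ k) :
    cc k * (1 - uu k) ^ y ≤ mom WW y := by
  have hhalf : uu k ≤ 1/2 := uu_le_half hk
  have hsub : BB k ⊆ Set.Ioo (0:ℝ) 1 := by
    rintro r ⟨hr1, hr2⟩
    constructor
    · linarith
    · have := uu_pos (k+1); linarith
  have hbase : (0:ℝ) ≤ 1 - uu k := by linarith
  have hint : IntegrableOn (fun r => r ^ y * WW r) (BB k) := (gg_intOn hy).mono_set hsub
  have step1 : ∫ r in BB k, r ^ y * WW r ≤ mom WW y := by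
    apply setIntegral_mono_set (gg_intOn hy)
    · filter_upwards [ae_restrict_mem measurableSet_Ioo] with r hr
      exact gg_nonneg r hr
    · exact HasSubset.Subset.eventuallyLE hsub
  refine le_trans ?_ step1
  have hmono : ∀ r ∈ BB k,
      (1 - uu k) ^ y * (cc k * 2^(k+1)) ≤ r ^ y * WW r := by
    intro r hrB
    rw [WW_eq hrB]
    apply mul_le_mul_of_nonneg_right _ (mul_nonneg (cc_nonneg k) (by positivity))
    exact Real.rpow_le_rpow hbase hrB.1 hy
  calc cc k * (1 - uu k) ^ y
      = (volume (BB k)).toReal • ((1 - uu k) ^ y * (cc k * 2^(k+1))) := by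
        rw [BB, Real.volume_Ico, show (1 - uu (k+1)) - (1 - uu k) = uu k - uu (k+1) by ring,
          ENNReal.toReal_ofReal (by have := uu_succ k; have := uu_pos (k+1); linarith)]
        have huu : uu k - uu (k+1) = uu (k+1) := by have := uu_succ k; linarith
        rw [huu, smul_eq_mul]
        linear_combination (-(cc k * (1 - uu k) ^ y)) * uu_mul (k+1)
    _ = ∫ _ in BB k, (1 - uu k) ^ y * (cc k * 2^(k+1)) := (setIntegral_const _).symm
    _ ≤ ∫ r in BB k, r ^ y * WW r := by
        apply setIntegral_mono_on ((integrableOn_const_iff).mpr _) hint (BB_meas k) hmono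
        right
        rw [BB, Real.volume_Ico]
        exact ENNReal.ofReal_lt_top

end WDD

namespace WDD

lemma uu_add (m j : ℕ) : uu (m + j) = uu m * uu j := pow_add _ _ _

lemma block_integral (k : ℕ) : ∫ r in BB k, WW r = cc k := by
  rw [setIntegral_congr_fun (BB_meas k) (fun r hr => WW_eq hr)]
  rw [setIntegral_const, BB, Real.volume_real_Ico_of_le (by have := uu_succ k; have := uu_pos (k+1); linarith),
    show (1 - uu (k+1)) - (1 - uu k) = uu k - uu (k+1) by ring]
  have huu : uu k - uu (k+1) = uu (k+1) := by have := uu_succ k; linarith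
  rw [huu, smul_eq_mul]
  linear_combination (cc k) * uu_mul (k+1)

lemma tail_pos {r : ℝ} (h0 : 0 ≤ r) (h1 : r < 1) : 0 < tailInt WW r := by
  obtain ⟨N, hN⟩ := exists_pow_lt_of_lt_one (by linarith : (0:ℝ) < 1 - r)
    (by norm_num : (1/2:ℝ) < 1)
  set k := (N+1)^2 with hk
  have hsq : isSq k := ⟨Nat.one_le_pow 2 (N+1) (by omega), by rw [hk, Nat.sqrt_eq']⟩
  have huk : uu k < 1 - r := by
    have hNk : N ≤ k := by
      have : (N+1)^2 = N*N + 2*N + 1 := by ring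
      omega
    have : uu k ≤ (1/2:ℝ)^N := uu_anti.antitone hNk
    linarith
  have hccpos : 0 < cc k := by unfold cc; rw [if_pos hsq]; exact Real.exp_pos _
  have hsub : BB k ⊆ Set.Ioo r 1 := by
    rintro s ⟨hs1, hs2⟩
    constructor
    · linarith
    · have := uu_pos (k+1); linarith
  have hIoo : Set.Ioo r 1 ⊆ Set.Ico (0:ℝ) 1 := fun s hs => ⟨by linarith [hs.1], hs.2⟩
  calc (0:ℝ) < cc k := hccpos
    _ = ∫ s in BB k, WW s := (block_integral k).symm
    _ ≤ tailInt WW r := by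
        apply setIntegral_mono_set (WW_intOn.mono_set hIoo)
        · filter_upwards [ae_restrict_mem measurableSet_Ioo] with s _
          exact WW_nonneg s
        · exact HasSubset.Subset.eventuallyLE hsub

lemma cc_between {n k : ℕ} (h1 : n^2 < k) (h2 : k < (n+1)^2) : cc k = 0 := by
  unfold cc
  rw [if_neg]
  rintro ⟨-, hsq⟩
  have hs1 : n ≤ Nat.sqrt k := Nat.le_sqrt'.mpr h1.le
  have hs2 : Nat.sqrt k < n + 1 := Nat.sqrt_lt'.mpr h2
  have : Nat.sqrt k = n := by omega
  rw [this] at hsq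
  omega

lemma WW_gap {n : ℕ} {s : ℝ} (h1 : uu ((n+1)^2) < 1 - s) (h2 : 1 - s ≤ uu (n^2+1)) :
    WW s = 0 := by
  by_cases h : ∃ k, s ∈ BB k
  · obtain ⟨k, hk⟩ := h
    rw [WW_eq hk]
    have hk1 : n^2 < k := by
      by_contra hcon
      push_neg at hcon
      have : uu (n^2+1) ≤ uu (k+1) := uu_anti.antitone (by omega)
      have := hk.2
      linarith
    have hk2 : k < (n+1)^2 := by
      by_contra hcon
      push_neg at hcon
      have : uu k ≤ uu ((n+1)^2) := uu_anti.antitone hcon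
      have := hk.1
      linarith
    rw [cc_between hk1 hk2]
    ring
  · push_neg at h
    exact WW_zero h

lemma not_memDd_aux {K C : ℝ} (hK : 1 < K) (hC : 1 < C)
    (h : ∀ r ∈ Set.Ico (0:ℝ) 1, C * tailInt WW (1 - (1 - r) / K) ≤ tailInt WW r) : False := by
  obtain ⟨m, hm⟩ := pow_unbounded_of_one_lt K (by norm_num : (1:ℝ) < 2)
  set n := m + 1 with hn
  have hKn : K < 2 ^ (2*n) := lt_of_lt_of_le hm (by
    apply pow_le_pow_right₀ (by norm_num : (1:ℝ) ≤ 2)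
    omega)
  set a := n^2 with ha
  set r := 1 - uu (a+1) with hr
  have hr0 : (0:ℝ) ≤ r := by
    have := uu_le_half (k := a+1) (by omega)
    rw [hr]; linarith
  have hr1 : r < 1 := by have := uu_pos (a+1); rw [hr]; linarith
  have h1r : 1 - r = uu (a+1) := by rw [hr]; ring
  set r' := 1 - (1 - r) / K with hr'
  have hKpos : (0:ℝ) < K := by linarith
  have hrr' : r < r' := by
    rw [hr']
    have h2 : (1-r)/K < 1 - r := by
      rw [div_lt_iff₀ hKpos]
      nlinarith [uu_pos (a+1)]
    linarith
  have hr'1 : r' < 1 := by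
    rw [hr']
    have : 0 < (1-r)/K := div_pos (by rw [h1r]; exact uu_pos _) hKpos
    linarith
  -- the gap: uu ((n+1)^2) < 1 - s for s ≤ r'
  have hgap : uu ((n+1)^2) < uu (a+1) / K := by
    have hb : (n+1)^2 = (a+1) + 2*n := by rw [ha]; ring
    have : uu ((n+1)^2) = uu (a+1) * uu (2*n) := by rw [hb, uu_add]
    rw [this, lt_div_iff₀ hKpos]
    calc uu (a+1) * uu (2*n) * K < uu (a+1) * uu (2*n) * 2^(2*n) := by
          exact mul_lt_mul_of_pos_left hKn (mul_pos (uu_pos _) (uu_pos _))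
      _ = uu (a+1) * (2^(2*n) * uu (2*n)) := by ring
      _ = uu (a+1) := by rw [uu_mul (2*n)]; ring
  have hflat : tailInt WW r = tailInt WW r' := by
    have hsplit : Set.Ioo r 1 = Set.Ioc r r' ∪ Set.Ioo r' 1 :=
      (Set.Ioc_union_Ioo_eq_Ioo hrr'.le hr'1).symm
    have hdisj : Disjoint (Set.Ioc r r') (Set.Ioo r' 1) := by
      rw [Set.disjoint_left]
      rintro s ⟨-, hs2⟩ ⟨hs3, -⟩
      linarith
    have hsubIcc : Set.Ioc r r' ⊆ Set.Ico (0:ℝ) 1 := fun s hs =>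
      ⟨by linarith [hs.1], by linarith [hs.2]⟩
    have hsubIcc' : Set.Ioo r' 1 ⊆ Set.Ico (0:ℝ) 1 := fun s hs =>
      ⟨by linarith [hs.1], hs.2⟩
    unfold tailInt
    rw [hsplit, setIntegral_union hdisj measurableSet_Ioo
      (WW_intOn.mono_set hsubIcc) (WW_intOn.mono_set hsubIcc')]
    have hzero : ∫ s in Set.Ioc r r', WW s = 0 := by
      rw [setIntegral_congr_fun measurableSet_Ioc (g := fun _ => (0:ℝ))]
      · exact integral_zero _ _
      · intro s hs
        apply WW_gap (n := n)
        · calc uu ((n+1)^2) < uu (a+1) / K := hgap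
            _ = 1 - r' := by rw [hr', h1r]; ring
            _ ≤ 1 - s := by linarith [hs.2]
        · rw [← h1r]; linarith [hs.1]
      
    rw [hzero, zero_add]
  have hpos := tail_pos (r := r') (by linarith) hr'1
  have := h r ⟨hr0, hr1⟩
  rw [← hr', hflat] at this
  nlinarith
end WDD

namespace WDD

lemma one_sub_ge {t : ℝ} (ht0 : 0 ≤ t) (ht : t ≤ 1/2) : Real.exp (-(2*t)) ≤ 1 - t := by
  have h1 : 1 + 2*t ≤ Real.exp (2*t) := by linarith [Real.add_one_le_exp (2*t)]
  have h2 : 1 ≤ (1-t) * Real.exp (2*t) := by nlinarith [Real.exp_pos (2*t)]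
  rw [Real.exp_neg, inv_eq_one_div, div_le_iff₀ (Real.exp_pos _)]
  linarith

lemma cc_eq_of_sq {k : ℕ} (hk : isSq k) : cc k = Real.exp (-(4:ℝ)^k) := by
  unfold cc; rw [if_pos hk]

lemma mom_lower {x : ℝ} (hx0 : 0 ≤ x) {k : ℕ} (hk : isSq k) :
    Real.exp (-((4:ℝ)^k + 2*x*uu k)) ≤ mom WW x := by
  have h1 : Real.exp (-(2*uu k)) ≤ 1 - uu k := one_sub_ge (uu_pos k).le (uu_le_half hk.1)
  have h2 : Real.exp (-(2*uu k)) ^ x ≤ (1 - uu k) ^ x :=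
    Real.rpow_le_rpow (Real.exp_pos _).le h1 hx0
  rw [← Real.exp_mul] at h2
  calc Real.exp (-((4:ℝ)^k + 2*x*uu k))
      = Real.exp (-(4:ℝ)^k) * Real.exp (-(2*uu k) * x) := by
        rw [← Real.exp_add]; ring_nf
    _ ≤ Real.exp (-(4:ℝ)^k) * (1 - uu k) ^ x :=
        mul_le_mul_of_nonneg_left h2 (Real.exp_pos _).le
    _ = cc k * (1 - uu k) ^ x := by rw [cc_eq_of_sq hk]
    _ ≤ mom WW x := blockL hx0 hk.1

lemma cc_le_uu (k : ℕ) : cc k ≤ uu k := by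
  have h1 : cc k ≤ Real.exp (-(4:ℝ)^k) := cc_le k
  have h2 : Real.exp (-(4:ℝ)^k) ≤ uu k := by
    rw [Real.exp_neg, inv_eq_one_div, div_le_iff₀ (Real.exp_pos _)]
    have h3 := two_pow_le_exp k
    have h4 : (1:ℝ) ≤ uu k * 2^(k+1) := by
      have h := uu_mul k
      rw [pow_succ]
      nlinarith [uu_pos k]
    nlinarith [Real.exp_pos ((4:ℝ)^k), uu_pos k]
  linarith

lemma TT_nonneg (x : ℝ) (k : ℕ) : 0 ≤ cc k * Real.exp (-(8*x*uu k)) :=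
  mul_nonneg (cc_nonneg k) (Real.exp_pos _).le

lemma TT_summable {x : ℝ} (hx0 : 0 ≤ x) :
    Summable (fun k => cc k * Real.exp (-(8*x*uu k))) := by
  apply Summable.of_nonneg_of_le (TT_nonneg x) (g := fun k => cc k * Real.exp (-(8*x*uu k)))
    (f := uu)
  · intro k
    calc cc k * Real.exp (-(8*x*uu k)) ≤ cc k * 1 := by
          apply mul_le_mul_of_nonneg_left _ (cc_nonneg k)
          rw [Real.exp_le_one_iff]
          have := uu_pos k
          nlinarith
      _ = cc k := by ring
      _ ≤ uu k := cc_le_uu k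
  · exact summable_geometric_of_lt_one (by norm_num) (by norm_num)

lemma mom_upper {x : ℝ} (hx0 : 0 ≤ x) :
    mom WW (16*x) ≤ ∑' k, cc k * Real.exp (-(8*x*uu k)) := by
  have h16 : (0:ℝ) ≤ 16*x := by linarith
  have hs := mom_hasSum (y := 16*x) h16
  rw [← hs.tsum_eq]
  apply Summable.tsum_le_tsum _ hs.summable (TT_summable hx0)
  intro k
  calc ∫ r in BB k ∩ Set.Ioo (0:ℝ) 1, r ^ (16*x) * WW r
      ≤ cc k * (1 - uu (k+1)) ^ (16*x) := blockU h16 k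
    _ ≤ cc k * Real.exp (-(8*x*uu k)) := by
        apply mul_le_mul_of_nonneg_left _ (cc_nonneg k)
        have hbase : (0:ℝ) ≤ 1 - uu (k+1) := by
          have := uu_le_half (k := k+1) (by omega); linarith
        have h1 : 1 - uu (k+1) ≤ Real.exp (-(uu (k+1))) := by
          linarith [Real.add_one_le_exp (-(uu (k+1)))]
        calc (1 - uu (k+1)) ^ (16*x) ≤ Real.exp (-(uu (k+1))) ^ (16*x) :=
              Real.rpow_le_rpow hbase h1 h16
          _ = Real.exp (-(uu (k+1)) * (16*x)) := by rw [← Real.exp_mul]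
          _ = Real.exp (-(8*x*uu k)) := by
              rw [uu_succ k]; ring_nf

lemma texp {t : ℝ} (ht : 3 ≤ t) : Real.exp (-t) ≤ 3 * Real.exp (-3) / t := by
  have h1 : Real.exp 3 * (t/3) ≤ Real.exp t := by
    rw [show t = 3 + (t-3) by ring, Real.exp_add]
    have h2 : t/3 ≤ Real.exp (t-3) := by
      have := Real.add_one_le_exp (t-3)
      linarith
    have h3 := Real.exp_pos (3:ℝ)
    have h4 : (3:ℝ) + (t - 3) = t := by ring
    rw [h4]
    nlinarith
  have htpos : (0:ℝ) < t := by linarith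
  have h5 : (0:ℝ) < Real.exp 3 * (t/3) := by positivity
  rw [Real.exp_neg, Real.exp_neg, div_eq_mul_inv]
  have h6 : (Real.exp t)⁻¹ ≤ (Real.exp 3 * (t/3))⁻¹ := by
    apply inv_anti₀ h5 h1
  calc (Real.exp t)⁻¹ ≤ (Real.exp 3 * (t/3))⁻¹ := h6
    _ = 3 * (Real.exp 3)⁻¹ * t⁻¹ := by
        field_simp
    _ = 3 * (Real.exp 3)⁻¹ / t := by rw [div_eq_mul_inv]
  
end WDD

namespace WDD

lemma exp_bounds : Real.exp (-(3:ℝ)) ≤ 1/19 ∧ Real.exp (-(2:ℝ)) ≤ 1/7 := by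
  have he := Real.exp_one_gt_d9
  have h2 : (7:ℝ) ≤ Real.exp 2 := by
    have : Real.exp 2 = Real.exp 1 * Real.exp 1 := by
      rw [← Real.exp_add]; norm_num
    nlinarith
  have h3 : (19:ℝ) ≤ Real.exp 3 := by
    have : Real.exp 3 = Real.exp 1 * Real.exp 1 * Real.exp 1 := by
      rw [← Real.exp_add, ← Real.exp_add]; norm_num
    nlinarith
  constructor
  · rw [Real.exp_neg, inv_eq_one_div, div_le_div_iff₀ (Real.exp_pos _) (by norm_num)]
    linarith
  · rw [Real.exp_neg, inv_eq_one_div, div_le_div_iff₀ (Real.exp_pos _) (by norm_num)]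
    linarith

set_option maxHeartbeats 1000000 in
lemma main_est {x : ℝ} (hx : 1 ≤ x) : 2 * mom WW (16*x) ≤ mom WW x := by
  classical
  have hxpos : (0:ℝ) < x := by linarith
  set P : ℕ → Prop := fun m => (2:ℝ)^(m^2) ≤ 2*x with hP
  letI : DecidablePred P := fun _ => Classical.propDecidable _
  have hP1 : P 1 := by
    show (2:ℝ)^(1^2) ≤ 2*x
    norm_num
    linarith
  have hbound : ∀ m, P m → m ≤ ⌈2*x⌉₊ := by
    intro m hm
    have h1 : (m:ℝ) ≤ (2:ℝ)^m := by
      have := Nat.lt_two_pow_self (n := m)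
      have : (m:ℕ) < 2^m := this
      exact_mod_cast this.le
    have h2 : (2:ℝ)^m ≤ (2:ℝ)^(m^2) :=
      pow_le_pow_right₀ (by norm_num) (Nat.le_self_pow (by norm_num) m)
    have h3 : (m:ℝ) ≤ 2*x := by
      calc (m:ℝ) ≤ (2:ℝ)^m := h1
        _ ≤ (2:ℝ)^(m^2) := h2
        _ ≤ 2*x := hm
    have h4 : (m:ℝ) ≤ (⌈2*x⌉₊:ℝ) := le_trans h3 (Nat.le_ceil _)
    exact_mod_cast h4
  set N := ⌈2*x⌉₊ with hN
  set n := Nat.findGreatest P N with hn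
  have hn1 : 1 ≤ n := Nat.le_findGreatest (hbound 1 hP1) hP1
  have hPn : P n := Nat.findGreatest_spec (hbound 1 hP1) hP1
  have hPn1 : ¬ P (n+1) := by
    by_cases hle : n+1 ≤ N
    · exact Nat.findGreatest_is_greatest (by omega) hle
    · intro hcon
      exact hle (hbound (n+1) hcon)
  set a := n^2 with ha
  set b := (n+1)^2 with hb
  have hab : a < b := Nat.pow_lt_pow_left (by omega) (by norm_num)
  have ha1 : 1 ≤ a := Nat.one_le_pow 2 n (by omega)
  have h2a : (2:ℝ)^a ≤ 2*x := hPn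
  have h2b : 2*x < (2:ℝ)^b := lt_of_not_ge hPn1
  -- argmin over squares below b
  set A := (Finset.range b).filter isSq with hA
  have hnA : a ∈ A := Finset.mem_filter.mpr
    ⟨Finset.mem_range.mpr hab, ⟨ha1, by rw [ha, Nat.sqrt_eq']⟩⟩
  obtain ⟨p, hpA, hpmin⟩ := Finset.exists_min_image A (fun k => (4:ℝ)^k + 2*x*uu k) ⟨a, hnA⟩
  have hpsq : isSq p := (Finset.mem_filter.mp hpA).2
  set φp := (4:ℝ)^p + 2*x*uu p with hφp
  have hlow : Real.exp (-φp) ≤ mom WW x := mom_lower hxpos.le hpsq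
  set TT := fun k => cc k * Real.exp (-(8*x*uu k)) with hTT
  have hU : mom WW (16*x) ≤ ∑' k, TT k := mom_upper hxpos.le
  have hTTsum : Summable TT := TT_summable hxpos.le
  have hsplit : ∑' k, TT k = (∑ k ∈ Finset.range b, TT k) + ∑' j, TT (j + b) :=
    (hTTsum.sum_add_tsum_nat_add b).symm
  -- head estimate
  have hhead : ∑ k ∈ Finset.range b, TT k ≤ 2 * Real.exp (-(3:ℝ)) * Real.exp (-φp) := by
    have hzero : ∀ k ∈ Finset.range b, k ∉ Finset.range (a+1) → TT k = 0 := by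
      intro k hk hk'
      rw [Finset.mem_range] at hk
      rw [Finset.mem_range, not_lt] at hk'
      have hcc : cc k = 0 := cc_between (n := n) (by omega) (by omega)
      rw [hTT]
      simp [hcc]
    rw [← Finset.sum_subset (Finset.range_subset_range.mpr (by omega : a+1 ≤ b)) hzero]
    have hterm : ∀ k ∈ Finset.range (a+1),
        TT k ≤ Real.exp (-φp) * Real.exp (-(3:ℝ)) * (2:ℝ)^k / (2*x) := by
      intro k hk
      rw [Finset.mem_range] at hk
      by_cases hsq : isSq k
      · have hkA : k ∈ A := Finset.mem_filter.mpr ⟨Finset.mem_range.mpr (by omega), hsq⟩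
        have hφk : φp ≤ (4:ℝ)^k + 2*x*uu k := hpmin k hkA
        have h2k : (2:ℝ)^k ≤ 2*x := by
          calc (2:ℝ)^k ≤ (2:ℝ)^a := pow_le_pow_right₀ (by norm_num) (by omega)
            _ ≤ 2*x := h2a
        have hxu : 1 ≤ 2*x*uu k := by
          have h5 : (2:ℝ)^k * uu k ≤ 2*x*uu k :=
            mul_le_mul_of_nonneg_right h2k (uu_pos k).le
          rw [uu_mul k] at h5
          exact h5
        have ht3 : (3:ℝ) ≤ 6*x*uu k := by linarith
        have hexp : Real.exp (-(6*x*uu k)) ≤ 3 * Real.exp (-(3:ℝ)) / (6*x*uu k) := texp ht3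
        have hTTk : TT k = Real.exp (-((4:ℝ)^k + 2*x*uu k)) * Real.exp (-(6*x*uu k)) := by
          show cc k * Real.exp (-(8*x*uu k)) = _
          rw [cc_eq_of_sq hsq, ← Real.exp_add, ← Real.exp_add]
          ring_nf
        rw [hTTk]
        have hstep1 : Real.exp (-((4:ℝ)^k + 2*x*uu k)) ≤ Real.exp (-φp) :=
          Real.exp_le_exp.mpr (by linarith)
        have hstep2 : 3 * Real.exp (-(3:ℝ)) / (6*x*uu k) = Real.exp (-(3:ℝ)) * (2:ℝ)^k / (2*x) := by
          have huk := uu_pos k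
          have hmulk := uu_mul k
          rw [div_eq_div_iff (by nlinarith : (0:ℝ) < 6*x*uu k).ne' (by linarith : (0:ℝ) < 2*x).ne']
          linear_combination (-(6*x*Real.exp (-(3:ℝ)))) * hmulk
        calc Real.exp (-((4:ℝ)^k + 2*x*uu k)) * Real.exp (-(6*x*uu k))
            ≤ Real.exp (-φp) * (3 * Real.exp (-(3:ℝ)) / (6*x*uu k)) := by
              apply mul_le_mul hstep1 hexp (Real.exp_pos _).le (Real.exp_pos _).le
          _ = Real.exp (-φp) * Real.exp (-(3:ℝ)) * (2:ℝ)^k / (2*x) := by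
              rw [hstep2]; ring
      · have : cc k = 0 := by unfold cc; rw [if_neg hsq]
        rw [hTT]
        simp only [this, zero_mul]
        positivity
    calc ∑ k ∈ Finset.range (a+1), TT k
        ≤ ∑ k ∈ Finset.range (a+1), Real.exp (-φp) * Real.exp (-(3:ℝ)) * (2:ℝ)^k / (2*x) :=
          Finset.sum_le_sum hterm
      _ = Real.exp (-φp) * Real.exp (-(3:ℝ)) / (2*x) * ∑ k ∈ Finset.range (a+1), (2:ℝ)^k := by
          rw [Finset.mul_sum]
          apply Finset.sum_congr rfl
          intro k _
          ring
      _ ≤ 2 * Real.exp (-(3:ℝ)) * Real.exp (-φp) := by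
          have hgeom : ∑ k ∈ Finset.range (a+1), (2:ℝ)^k = 2^(a+1) - 1 := by
            have := geom_sum_eq (by norm_num : (2:ℝ) ≠ 1) (a+1)
            rw [this]; norm_num
          rw [hgeom]
          have h2a1 : (2:ℝ)^(a+1) ≤ 4*x := by
            rw [pow_succ]
            nlinarith
          have hpos1 : (0:ℝ) < Real.exp (-φp) * Real.exp (-(3:ℝ)) := by positivity
          rw [div_mul_eq_mul_div, div_le_iff₀ (by linarith : (0:ℝ) < 2*x)]
          nlinarith [Real.exp_pos (-φp), Real.exp_pos (-(3:ℝ))]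
  -- tail estimate
  have htail : ∑' j, TT (j + b) ≤ 2 * Real.exp (-(2:ℝ)) * Real.exp (-φp) := by
    have hterm : ∀ j : ℕ, TT (j + b) ≤ Real.exp (-(4:ℝ)^b) * (Real.exp (-(1:ℝ)))^j := by
      intro j
      have h1 : TT (j + b) ≤ Real.exp (-(4:ℝ)^(j+b)) := by
        calc TT (j+b) ≤ cc (j+b) * 1 := by
              apply mul_le_mul_of_nonneg_left _ (cc_nonneg _)
              rw [Real.exp_le_one_iff]
              nlinarith [uu_pos (j+b)]
          _ = cc (j+b) := by ring
          _ ≤ Real.exp (-(4:ℝ)^(j+b)) := cc_le _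
      have h2 : (4:ℝ)^b + (j:ℝ) ≤ (4:ℝ)^(j+b) := by
        have h3 : (1:ℝ) + (j:ℝ)*3 ≤ (1+3)^j := one_add_mul_le_pow (by norm_num) j
        have h4 : (4:ℝ)^(j+b) = (4:ℝ)^j * (4:ℝ)^b := pow_add 4 j b
        have h5 : (1:ℝ) ≤ (4:ℝ)^b := one_le_pow₀ (by norm_num)
        have h6 : ((1:ℝ)+3)^j = (4:ℝ)^j := by norm_num
        rw [h4]
        nlinarith [Nat.cast_nonneg (α := ℝ) j]
      calc TT (j+b) ≤ Real.exp (-(4:ℝ)^(j+b)) := h1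
        _ ≤ Real.exp (-((4:ℝ)^b + (j:ℝ))) := Real.exp_le_exp.mpr (by linarith)
        _ = Real.exp (-(4:ℝ)^b) * (Real.exp (-(1:ℝ)))^j := by
            rw [← Real.exp_nat_mul, ← Real.exp_add]
            ring_nf
    have hb4 : φp + 2 ≤ (4:ℝ)^b := by
      have hφa : φp ≤ (4:ℝ)^a + 2*x*uu a := hpmin a hnA
      have hba : b = a + (2*n+1) := by rw [ha, hb]; ring
      have h2xua : 2*x*uu a < (2:ℝ)^(2*n+1) := by
        have h7 : 2*x*uu a < (2:ℝ)^b * uu a :=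
          mul_lt_mul_of_pos_right h2b (uu_pos a)
        have h8 : (2:ℝ)^b * uu a = (2:ℝ)^(2*n+1) := by
          rw [hba, pow_add]
          linear_combination ((2:ℝ)^(2*n+1)) * uu_mul a
        linarith
      have hPP : (4:ℝ) ≤ (4:ℝ)^a := by
        calc (4:ℝ) = (4:ℝ)^1 := by norm_num
          _ ≤ (4:ℝ)^a := pow_le_pow_right₀ (by norm_num) ha1
      have hQQ : (4:ℝ) ≤ (4:ℝ)^(2*n+1) := by
        calc (4:ℝ) = (4:ℝ)^1 := by norm_num
          _ ≤ (4:ℝ)^(2*n+1) := pow_le_pow_right₀ (by norm_num) (by omega)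
      have h24 : (2:ℝ)^(2*n+1) ≤ (4:ℝ)^(2*n+1) :=
        pow_le_pow_left₀ (by norm_num) (by norm_num) _
      have h4b : (4:ℝ)^b = (4:ℝ)^a * (4:ℝ)^(2*n+1) := by rw [hba, pow_add]
      rw [h4b]
      nlinarith [mul_nonneg (by linarith : (0:ℝ) ≤ (4:ℝ)^a - 4)
        (by linarith : (0:ℝ) ≤ (4:ℝ)^(2*n+1) - 4)]
    have hsum1 : Summable (fun j => TT (j + b)) := (summable_nat_add_iff b).mpr hTTsum
    have hgeo : Summable (fun j : ℕ => Real.exp (-(4:ℝ)^b) * (Real.exp (-(1:ℝ)))^j) :=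
      (summable_geometric_of_lt_one (Real.exp_pos _).le
        (Real.exp_lt_one_iff.mpr (by norm_num))).mul_left _
    calc ∑' j, TT (j + b) ≤ ∑' j, Real.exp (-(4:ℝ)^b) * (Real.exp (-(1:ℝ)))^j :=
          Summable.tsum_le_tsum hterm hsum1 hgeo
      _ = Real.exp (-(4:ℝ)^b) * (1 - Real.exp (-(1:ℝ)))⁻¹ := by
          rw [tsum_mul_left, tsum_geometric_of_lt_one (Real.exp_pos _).le
            (Real.exp_lt_one_iff.mpr (by norm_num))]
      _ ≤ 2 * Real.exp (-(2:ℝ)) * Real.exp (-φp) := by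
          have he1 : Real.exp (-(1:ℝ)) ≤ 1/2 := by
            rw [Real.exp_neg, inv_eq_one_div, div_le_div_iff₀ (Real.exp_pos _) (by norm_num)]
            linarith [Real.add_one_le_exp (1:ℝ)]
          have hinv : (1 - Real.exp (-(1:ℝ)))⁻¹ ≤ 2 := by
            have hh : (1:ℝ)/2 ≤ 1 - Real.exp (-(1:ℝ)) := by linarith
            calc (1 - Real.exp (-(1:ℝ)))⁻¹ ≤ ((1:ℝ)/2)⁻¹ :=
                  inv_anti₀ (by norm_num) hh
              _ = 2 := by norm_num
          have hexpb : Real.exp (-(4:ℝ)^b) ≤ Real.exp (-(2:ℝ)) * Real.exp (-φp) := by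
            rw [← Real.exp_add]
            exact Real.exp_le_exp.mpr (by linarith)
          have hp1 := Real.exp_pos (-(4:ℝ)^b)
          have hp2 : (0:ℝ) < (1 - Real.exp (-(1:ℝ)))⁻¹ := by
            apply inv_pos.mpr; linarith
          nlinarith [Real.exp_pos (-(2:ℝ)), Real.exp_pos (-φp)]
  -- final assembly
  have hnum := exp_bounds
  have hE := Real.exp_pos (-φp)
  have h3p := Real.exp_pos (-(3:ℝ))
  have h2p := Real.exp_pos (-(2:ℝ))
  have htot : mom WW (16*x) ≤ (2 * Real.exp (-(3:ℝ)) + 2 * Real.exp (-(2:ℝ))) * Real.exp (-φp) := by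
    calc mom WW (16*x) ≤ ∑' k, TT k := hU
      _ = (∑ k ∈ Finset.range b, TT k) + ∑' j, TT (j + b) := hsplit
      _ ≤ 2 * Real.exp (-(3:ℝ)) * Real.exp (-φp) + 2 * Real.exp (-(2:ℝ)) * Real.exp (-φp) :=
          add_le_add hhead htail
      _ = (2 * Real.exp (-(3:ℝ)) + 2 * Real.exp (-(2:ℝ))) * Real.exp (-φp) := by ring
  have hhalf : (2 * Real.exp (-(3:ℝ)) + 2 * Real.exp (-(2:ℝ))) ≤ 1/2 := by
    obtain ⟨hb1, hb2⟩ := hnum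
    linarith
  nlinarith

end WDD


/-- The class Ď is a proper subclass of M: there is a radial weight `W ∈ M \ Ď`. -/
theorem exists_weight_in_M_not_Dd :
    ∃ W : ℝ → ℝ, (∀ r ∈ Set.Ico (0:ℝ) 1, 0 ≤ W r) ∧
      MeasureTheory.IntegrableOn W (Set.Ico 0 1) ∧
      (∀ r ∈ Set.Ico (0:ℝ) 1, 0 < tailInt W r) ∧
      memM W ∧ ¬ memDd W := by
  refine ⟨WDD.WW, fun r _ => WDD.WW_nonneg r, WDD.WW_intOn,
    fun r hr => WDD.tail_pos hr.1 hr.2, ?_, ?_⟩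
  · exact ⟨2, by norm_num, 16, by norm_num, fun x hx => WDD.main_est hx⟩
  · rintro ⟨K, hK, C, hC, h⟩
    exact WDD.not_memDd_aux hK hC (fun r hr => h r hr)
end

section
/- Let ω be a nonnegative integrable function on [0,1) with ω̂(r) > 0 for all r, and suppose ω ∈ Ď. Let K > 1 and for n ∈ ℕ define ρ_n ∈ [0,1) by ω̂(ρ_n) = ω̂(0)·K^{−n}. Then there exists a constant C₁ > 0 such that 1 − ρ_n ≤ C₁·(1 − ρ_{n+1}) for all n ≥ 0. -/
open MeasureTheory Set

lemma tailInt_anti (ω : ℝ → ℝ)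
    (hnn : ∀ r ∈ Set.Ico (0:ℝ) 1, 0 ≤ ω r)
    (hint : MeasureTheory.IntegrableOn ω (Set.Ico 0 1))
    {a b : ℝ} (ha : 0 ≤ a) (hab : a ≤ b) : tailInt ω b ≤ tailInt ω a := by
  unfold tailInt
  apply setIntegral_mono_set
  · exact hint.mono_set (fun x hx => ⟨le_of_lt (lt_of_le_of_lt ha hx.1), hx.2⟩)
  · filter_upwards [ae_restrict_mem measurableSet_Ioo] with x hx
    exact hnn x ⟨le_of_lt (lt_of_le_of_lt ha hx.1), hx.2⟩
  · exact HasSubset.Subset.eventuallyLE (Set.Ioo_subset_Ioo hab le_rfl)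

/-- For `ω ∈ Ď` the sequence `ρ_n` defined by `ω̂(ρ_n) = ω̂(0) K^(-n)` satisfies
`1 - ρ_n ≤ C₁ (1 - ρ_{n+1})`. -/
theorem Dd_rho_sequence_comparable (ω : ℝ → ℝ)
    (hnn : ∀ r ∈ Set.Ico (0:ℝ) 1, 0 ≤ ω r)
    (hint : MeasureTheory.IntegrableOn ω (Set.Ico 0 1))
    (hpos : ∀ r ∈ Set.Ico (0:ℝ) 1, 0 < tailInt ω r)
    (hDd : ∃ K₀ > (1:ℝ), ∃ C₀ > (1:ℝ), ∀ r ∈ Set.Ico (0:ℝ) 1,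
      C₀ * tailInt ω (1 - (1 - r) / K₀) ≤ tailInt ω r)
    (K : ℝ) (hK : 1 < K)
    (ρ : ℕ → ℝ) (hρmem : ∀ n, ρ n ∈ Set.Ico (0:ℝ) 1)
    (hρ : ∀ n : ℕ, tailInt ω (ρ n) = tailInt ω 0 * K ^ (-(n:ℝ))) :
    ∃ C₁ > (0:ℝ), ∀ n : ℕ, 1 - ρ n ≤ C₁ * (1 - ρ (n + 1)) := by
  obtain ⟨K₀, hK₀, C₀, hC₀, hDd⟩ := hDd
  have hK₀0 : (0:ℝ) < K₀ := lt_trans one_pos hK₀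
  -- iterated Ď condition
  have hiter : ∀ m : ℕ, ∀ r ∈ Set.Ico (0:ℝ) 1,
      C₀ ^ m * tailInt ω (1 - (1 - r) / K₀ ^ m) ≤ tailInt ω r := by
    intro m
    induction m with
    | zero => intro r hr; simp
    | succ m ih =>
      intro r hr
      set r' : ℝ := 1 - (1 - r) / K₀ with hr'def
      have h1r : 0 < 1 - r := by linarith [hr.2]
      have hr'mem : r' ∈ Set.Ico (0:ℝ) 1 := by
        constructor
        · have : (1 - r) / K₀ ≤ 1 - r := by
            rw [div_le_iff₀ hK₀0]
            nlinarith
          simp only [hr'def]; linarith [hr.1]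
        · have : 0 < (1 - r) / K₀ := div_pos h1r hK₀0
          simp only [hr'def]; linarith
      have key : 1 - (1 - r') / K₀ ^ m = 1 - (1 - r) / K₀ ^ (m + 1) := by
        simp only [hr'def]
        field_simp
        ring
      have h1 := ih r' hr'mem
      rw [key] at h1
      have h2 := hDd r hr
      calc C₀ ^ (m + 1) * tailInt ω (1 - (1 - r) / K₀ ^ (m + 1))
          = C₀ * (C₀ ^ m * tailInt ω (1 - (1 - r) / K₀ ^ (m + 1))) := by ring
        _ ≤ C₀ * tailInt ω r' := by
            apply mul_le_mul_of_nonneg_left h1 (le_of_lt (lt_trans one_pos hC₀))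
        _ ≤ tailInt ω r := h2
  obtain ⟨m, hm⟩ := pow_unbounded_of_one_lt K hC₀
  refine ⟨K₀ ^ m, pow_pos hK₀0 m, fun n => ?_⟩
  set r := ρ n with hr
  have hrmem := hρmem n
  have h1r : 0 < 1 - r := by linarith [hrmem.2]
  set t : ℝ := 1 - (1 - r) / K₀ ^ m with ht
  have hKm0 : (0:ℝ) < K₀ ^ m := pow_pos hK₀0 m
  have htmem : t ∈ Set.Ico (0:ℝ) 1 := by
    constructor
    · have h1 : (1:ℝ) ≤ K₀ ^ m := one_le_pow₀ (le_of_lt hK₀)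
      have : (1 - r) / K₀ ^ m ≤ 1 - r := by
        rw [div_le_iff₀ hKm0]; nlinarith
      simp only [ht]; linarith [hrmem.1]
    · have : 0 < (1 - r) / K₀ ^ m := div_pos h1r hKm0
      simp only [ht]; linarith
  -- claim : ρ (n+1) ≤ t
  have hclaim : ρ (n + 1) ≤ t := by
    by_contra hcon
    push_neg at hcon
    have hmono : tailInt ω (ρ (n + 1)) ≤ tailInt ω t :=
      tailInt_anti ω hnn hint htmem.1 (le_of_lt hcon)
    have hit := hiter m r hrmem
    -- tailInt ω t ≤ tailInt ω r / C₀ ^ m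
    have hC₀m : (0:ℝ) < C₀ ^ m := pow_pos (lt_trans one_pos hC₀) m
    have h2 : C₀ ^ m * tailInt ω (ρ (n + 1)) ≤ tailInt ω r := by
      calc C₀ ^ m * tailInt ω (ρ (n + 1)) ≤ C₀ ^ m * tailInt ω t :=
            mul_le_mul_of_nonneg_left hmono (le_of_lt hC₀m)
        _ ≤ tailInt ω r := hit
    have hposn1 : 0 < tailInt ω (ρ (n + 1)) := hpos _ (hρmem (n + 1))
    have h3 : K * tailInt ω (ρ (n + 1)) < tailInt ω r :=
      lt_of_lt_of_le (by nlinarith) h2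
    rw [hρ n, hρ (n + 1)] at h3
    have hK0 : (0:ℝ) < K := lt_trans one_pos hK
    have hrpow : K * K ^ (-((n:ℝ) + 1)) = K ^ (-(n:ℝ)) := by
      rw [show -((n:ℝ)+1) = -(n:ℝ) + (-1) by ring, Real.rpow_add hK0, Real.rpow_neg_one]
      field_simp
    have : K * (tailInt ω 0 * K ^ (-((n:ℝ) + 1))) = tailInt ω 0 * K ^ (-(n:ℝ)) := by
      rw [← hrpow]; ring
    push_cast at h3
    linarith [h3, this.ge, this.le]
  -- conclude
  have : (1 - r) / K₀ ^ m ≤ 1 - ρ (n + 1) := by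
    simp only [ht] at hclaim; linarith
  calc 1 - r = K₀ ^ m * ((1 - r) / K₀ ^ m) := by field_simp
    _ ≤ K₀ ^ m * (1 - ρ (n + 1)) := mul_le_mul_of_nonneg_left this (le_of_lt hKm0)
end

section
/- Let ω be a nonnegative integrable function on [0,1) with ω̂ > 0, and γ > 0. Suppose there exists C₁ > 0 such that ∫_0^r dt/(ω̂(t)^γ (1−t)) ≤ C₁/ω̂(r)^γ for all 0 ≤ r < 1. Then ω ∈ Ď: there exist K > 1 and C > 1 with ω̂(r) ≥ C·ω̂(1 − (1−r)/K) for all 0 ≤ r < 1. Conversely, if ω ∈ Ď then such a constant C₁ exists for every γ > 0. -/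
open MeasureTheory Set

lemma tail_zero (ω : ℝ → ℝ) {r : ℝ} (hr : 1 ≤ r) : tailInt ω r = 0 := by
  unfold tailInt
  rw [Set.Ioo_eq_empty (by intro h; linarith [h.trans (lt_of_le_of_lt hr h)])]
  · exact setIntegral_empty

lemma tail_mono (ω : ℝ → ℝ)
    (hnn : ∀ r ∈ Set.Ico (0:ℝ) 1, 0 ≤ ω r)
    (hint : MeasureTheory.IntegrableOn ω (Set.Ico 0 1))
    {t r : ℝ} (ht : 0 ≤ t) (htr : t ≤ r) : tailInt ω r ≤ tailInt ω t := by
  have hnn' : 0 ≤ tailInt ω t := by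
    rcases le_or_gt 1 t with h1 | h1
    · rw [tail_zero ω h1]
    · apply setIntegral_nonneg measurableSet_Ioo
      intro x hx
      exact hnn x ⟨ht.trans hx.1.le, hx.2⟩
  rcases le_or_gt 1 r with h1 | h1
  · rw [tail_zero ω h1]; exact hnn'
  · have hsplit : tailInt ω t = (∫ s in Set.Ioc t r, ω s) + tailInt ω r := by
      unfold tailInt
      rw [← setIntegral_union ((Set.Ioc_disjoint_Ioi le_rfl).mono_right Set.Ioo_subset_Ioi_self) measurableSet_Ioo
        (hint.mono_set (fun x hx => ⟨ht.trans hx.1.le, hx.2.trans_lt h1⟩))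
        (hint.mono_set (fun x hx => ⟨(ht.trans htr).trans hx.1.le, hx.2⟩)),
        Set.Ioc_union_Ioo_eq_Ioo htr h1]
    have : 0 ≤ ∫ s in Set.Ioc t r, ω s := by
      apply setIntegral_nonneg measurableSet_Ioc
      intro x hx
      exact hnn x ⟨ht.trans hx.1.le, hx.2.trans_lt h1⟩
    linarith [hsplit]

noncomputable def Ftail (ω : ℝ → ℝ) : ℝ → ℝ := fun t => tailInt ω (max t 0)

lemma Ftail_antitone (ω : ℝ → ℝ)
    (hnn : ∀ r ∈ Set.Ico (0:ℝ) 1, 0 ≤ ω r)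
    (hint : MeasureTheory.IntegrableOn ω (Set.Ico 0 1)) : Antitone (Ftail ω) :=
  fun a b hab => tail_mono ω hnn hint (le_max_right a 0) (max_le_max hab le_rfl)

lemma Ftail_eq (ω : ℝ → ℝ) {t : ℝ} (ht : 0 ≤ t) : Ftail ω t = tailInt ω t := by
  rw [Ftail, max_eq_left ht]

lemma integrand_integrable (ω : ℝ → ℝ)
    (hnn : ∀ r ∈ Set.Ico (0:ℝ) 1, 0 ≤ ω r)
    (hint : MeasureTheory.IntegrableOn ω (Set.Ico 0 1))
    (hpos : ∀ r ∈ Set.Ico (0:ℝ) 1, 0 < tailInt ω r)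
    {γ : ℝ} (hγ : 0 < γ) {a : ℝ} (ha0 : 0 ≤ a) (ha1 : a < 1) :
    IntegrableOn (fun t => 1 / ((tailInt ω t) ^ γ * (1 - t))) (Set.Ioo 0 a) := by
  have hFm : Measurable (Ftail ω) := (Ftail_antitone ω hnn hint).measurable
  have hm : Measurable (fun t => 1 / ((Ftail ω t) ^ γ * (1 - t))) := by
    apply Measurable.div measurable_const
    exact ((Real.continuous_rpow_const hγ.le).measurable.comp hFm).mul (measurable_const.sub measurable_id)
  have hmeas : AEStronglyMeasurable (fun t => 1 / ((tailInt ω t) ^ γ * (1 - t)))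
      (volume.restrict (Set.Ioo 0 a)) := by
    apply hm.aestronglyMeasurable.congr
    refine (ae_restrict_iff' measurableSet_Ioo).2 (Filter.Eventually.of_forall ?_)
    intro t ht
    simp only [Ftail_eq ω ht.1.le]
  have hMpos : 0 < (tailInt ω a) ^ γ * (1 - a) := by
    have := hpos a ⟨ha0, ha1⟩
    have : (0:ℝ) < (tailInt ω a) ^ γ := Real.rpow_pos_of_pos this γ
    nlinarith
  apply Integrable.mono' (by
    have hc : IntegrableOn (fun _ : ℝ => 1 / ((tailInt ω a) ^ γ * (1 - a))) (Set.Ioo 0 a) volume :=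
      integrableOn_const measure_Ioo_lt_top.ne
    exact hc) hmeas
  refine (ae_restrict_iff' measurableSet_Ioo).2 (Filter.Eventually.of_forall ?_)
  intro t ht
  have ht0 : 0 ≤ t := ht.1.le
  have ht1 : t < 1 := ht.2.trans ha1
  have hTt : 0 < tailInt ω t := hpos t ⟨ht0, ht1⟩
  have hden : 0 < (tailInt ω t) ^ γ * (1 - t) := by
    have := Real.rpow_pos_of_pos hTt γ
    nlinarith
  rw [Real.norm_eq_abs, abs_of_nonneg (by positivity)]
  apply one_div_le_one_div_of_le hMpos
  apply mul_le_mul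
  · exact Real.rpow_le_rpow (hpos a ⟨ha0, ha1⟩).le (tail_mono ω hnn hint ht0 ht.2.le) hγ.le
  · linarith [ht.2]
  · linarith
  · positivity

lemma iterate_bound (ω : ℝ → ℝ) {K C : ℝ} (hK : 1 < K) (hC : 1 < C)
    (hD : ∀ r ∈ Set.Ico (0:ℝ) 1, C * tailInt ω (1 - (1 - r) / K) ≤ tailInt ω r)
    (n : ℕ) : ∀ r ∈ Set.Ico (0:ℝ) 1, 0 ≤ 1 - K ^ n * (1 - r) →
      C ^ n * tailInt ω r ≤ tailInt ω (1 - K ^ n * (1 - r)) := by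
  induction n with
  | zero => intro r hr _; simp
  | succ n ih =>
    intro r hr h
    have h1r : 0 < 1 - r := by linarith [hr.2]
    have hKp : (0:ℝ) < K := by linarith
    have hKn : (0:ℝ) < K ^ n := pow_pos hKp n
    have hmono : K ^ n * (1 - r) ≤ K ^ (n + 1) * (1 - r) :=
      mul_le_mul_of_nonneg_right (pow_le_pow_right₀ (le_of_lt hK) (by omega)) h1r.le
    have h0n : 0 ≤ 1 - K ^ n * (1 - r) := by linarith
    have hs1 : 1 - K ^ (n + 1) * (1 - r) < 1 := by nlinarith [pow_pos hKp (n + 1)]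
    have hDs := hD (1 - K ^ (n + 1) * (1 - r)) ⟨h, hs1⟩
    have heq : 1 - (1 - (1 - K ^ (n + 1) * (1 - r))) / K = 1 - K ^ n * (1 - r) := by
      rw [pow_succ]
      field_simp
      ring
    rw [heq] at hDs
    calc C ^ (n + 1) * tailInt ω r = C * (C ^ n * tailInt ω r) := by ring
      _ ≤ C * tailInt ω (1 - K ^ n * (1 - r)) :=
          mul_le_mul_of_nonneg_left (ih r hr h0n) (by linarith)
      _ ≤ tailInt ω (1 - K ^ (n + 1) * (1 - r)) := hDs

lemma pointwise_bound (ω : ℝ → ℝ)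
    (hnn : ∀ r ∈ Set.Ico (0:ℝ) 1, 0 ≤ ω r)
    (hint : MeasureTheory.IntegrableOn ω (Set.Ico 0 1))
    (hpos : ∀ r ∈ Set.Ico (0:ℝ) 1, 0 < tailInt ω r)
    {K C : ℝ} (hK : 1 < K) (hC : 1 < C)
    (hD : ∀ r ∈ Set.Ico (0:ℝ) 1, C * tailInt ω (1 - (1 - r) / K) ≤ tailInt ω r)
    {t r : ℝ} (ht : 0 ≤ t) (htr : t ≤ r) (hr : r < 1) :
    tailInt ω r * ((1 - t) / (1 - r)) ^ (Real.logb K C) ≤ C * tailInt ω t := by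
  have hα : 0 < Real.logb K C := Real.logb_pos hK hC
  have h1r : 0 < 1 - r := by linarith
  have hx1 : 1 ≤ (1 - t) / (1 - r) := (one_le_div h1r).2 (by linarith)
  set x := (1 - t) / (1 - r) with hxdef
  have hx0 : 0 < x := lt_of_lt_of_le one_pos hx1
  set n := ⌊Real.logb K x⌋₊ with hndef
  have hlb0 : 0 ≤ Real.logb K x := Real.logb_nonneg hK hx1
  have hKpos : (0:ℝ) < K := by linarith
  have hKne : K ≠ 1 := ne_of_gt hK
  have hKn_le : K ^ n ≤ x := by
    have h := (Real.rpow_le_rpow_left_iff (x := K) hK).2 (Nat.floor_le hlb0)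
    rwa [Real.rpow_natCast, Real.rpow_logb hKpos hKne hx0] at h
  have htn : t ≤ 1 - K ^ n * (1 - r) := by
    have : K ^ n * (1 - r) ≤ 1 - t := by
      rw [hxdef] at hKn_le
      calc K ^ n * (1 - r) ≤ ((1 - t) / (1 - r)) * (1 - r) :=
            mul_le_mul_of_nonneg_right hKn_le h1r.le
        _ = 1 - t := by field_simp
    linarith
  have hiter := iterate_bound ω hK hC hD n r ⟨ht.trans htr, hr⟩ (by linarith)
  have hmono2 : tailInt ω (1 - K ^ n * (1 - r)) ≤ tailInt ω t :=
    tail_mono ω hnn hint ht htn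
  have hxα : x ^ Real.logb K C ≤ C ^ (n + 1) := by
    have h1 : x ≤ K ^ ((n : ℝ) + 1) := by
      have h := (Real.rpow_le_rpow_left_iff (x := K) hK).2 (Nat.lt_floor_add_one (Real.logb K x)).le
      rwa [Real.rpow_logb hKpos hKne hx0] at h
    have h2 : x ^ Real.logb K C ≤ (K ^ ((n : ℝ) + 1)) ^ Real.logb K C :=
      Real.rpow_le_rpow hx0.le h1 hα.le
    have h3 : (K ^ ((n : ℝ) + 1)) ^ Real.logb K C = C ^ (n + 1) := by
      rw [← Real.rpow_mul hKpos.le, mul_comm, Real.rpow_mul hKpos.le,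
        Real.rpow_logb hKpos hKne (by linarith : (0:ℝ) < C),
        show ((n : ℝ) + 1) = ((n + 1 : ℕ) : ℝ) by push_cast; ring,
        Real.rpow_natCast]
    rwa [h3] at h2
  have hTr : 0 < tailInt ω r := hpos r ⟨ht.trans htr, hr⟩
  calc tailInt ω r * x ^ Real.logb K C ≤ tailInt ω r * C ^ (n + 1) :=
        mul_le_mul_of_nonneg_left hxα hTr.le
    _ = C * (C ^ n * tailInt ω r) := by ring
    _ ≤ C * tailInt ω (1 - K ^ n * (1 - r)) :=
        mul_le_mul_of_nonneg_left hiter (by linarith)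
    _ ≤ C * tailInt ω t := mul_le_mul_of_nonneg_left hmono2 (by linarith)

/-- For each `γ > 0`, the integral condition
`∫_0^r dt/(ω̂(t)^γ (1-t)) ≤ C₁/ω̂(r)^γ` characterizes the class Ď. -/
theorem integral_condition_iff_Dd (ω : ℝ → ℝ)
    (hnn : ∀ r ∈ Set.Ico (0:ℝ) 1, 0 ≤ ω r)
    (hint : MeasureTheory.IntegrableOn ω (Set.Ico 0 1))
    (hpos : ∀ r ∈ Set.Ico (0:ℝ) 1, 0 < tailInt ω r)
    (γ : ℝ) (hγ : 0 < γ) :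
    (∃ C₁ > (0:ℝ), ∀ r ∈ Set.Ico (0:ℝ) 1,
        (∫ t in Set.Ioo (0:ℝ) r, 1 / ((tailInt ω t) ^ γ * (1 - t))) ≤ C₁ / (tailInt ω r) ^ γ)
      ↔ (∃ K > (1:ℝ), ∃ C > (1:ℝ), ∀ r ∈ Set.Ico (0:ℝ) 1,
          C * tailInt ω (1 - (1 - r) / K) ≤ tailInt ω r) := by
  constructor
  · rintro ⟨C₁, hC₁, h⟩
    refine ⟨Real.exp (2 * C₁), by nlinarith [Real.add_one_le_exp (2 * C₁)], (2:ℝ) ^ γ⁻¹,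
      (Real.one_lt_rpow_iff_of_pos (by norm_num)).2 (Or.inl ⟨by norm_num, by positivity⟩), ?_⟩
    intro r hr
    set K := Real.exp (2 * C₁) with hKdef
    have hK : 1 < K := by nlinarith [Real.add_one_le_exp (2 * C₁)]
    have h1r : 0 < 1 - r := by linarith [hr.2]
    set r' := 1 - (1 - r) / K with hr'def
    have hrr' : r < r' := by
      rw [hr'def]
      have : (1 - r) / K < 1 - r := div_lt_self h1r hK
      linarith
    have hr'1 : r' < 1 := by
      rw [hr'def]
      have : 0 < (1 - r) / K := div_pos h1r (by linarith)
      linarith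
    have hr'0 : 0 ≤ r' := le_of_lt (lt_of_le_of_lt hr.1 hrr')
    have hTr : 0 < tailInt ω r := hpos r hr
    have hTr' : 0 < tailInt ω r' := hpos r' ⟨hr'0, hr'1⟩
    have hA : 0 < (tailInt ω r) ^ γ := Real.rpow_pos_of_pos hTr γ
    have hB : 0 < (tailInt ω r') ^ γ := Real.rpow_pos_of_pos hTr' γ
    have hfint : IntegrableOn (fun t => 1 / ((tailInt ω t) ^ γ * (1 - t))) (Set.Ioo 0 r') :=
      integrand_integrable ω hnn hint hpos hγ hr'0 hr'1
    -- lower bound integral over Ioo r r'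
    have hlog : ∫ t in Set.Ioo r r', 1 / (1 - t) = 2 * C₁ := by
      rw [← integral_Ioc_eq_integral_Ioo, ← intervalIntegral.integral_of_le hrr'.le,
        show (∫ x in r..r', 1 / (1 - x)) = ∫ x in (1 - r')..(1 - r), 1 / x from
          intervalIntegral.integral_comp_sub_left (fun u => 1 / u) 1,
        integral_one_div (Set.notMem_uIcc_of_lt (by linarith) (by linarith)),
        show (1 - r) / (1 - r') = K by rw [hr'def]; field_simp; rw [sub_sub_cancel, div_self h1r.ne'],
        hKdef, Real.log_exp]
    have hconst : ∫ t in Set.Ioo r r', 1 / ((tailInt ω r) ^ γ * (1 - t))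
        = 2 * C₁ / (tailInt ω r) ^ γ := by
      have : (fun t => 1 / ((tailInt ω r) ^ γ * (1 - t)))
          = (fun t => ((tailInt ω r) ^ γ)⁻¹ * (1 / (1 - t))) := by
        funext t
        rw [mul_comm, ← div_div]
        rw [div_eq_mul_inv (1 / (1 - t)), mul_comm]
      rw [this, integral_const_mul, hlog]
      field_simp
    have hmono1 : ∫ t in Set.Ioo r r', 1 / ((tailInt ω r) ^ γ * (1 - t))
        ≤ ∫ t in Set.Ioo r r', 1 / ((tailInt ω t) ^ γ * (1 - t)) := by
      have hsub : Set.Ioo r r' ⊆ Set.Ioo 0 r' := fun x hx => ⟨lt_of_le_of_lt hr.1 hx.1, hx.2⟩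
      apply setIntegral_mono_on
      · -- integrability of constant-denominator fn on Ioo r r'
        have hcont : ContinuousOn (fun t => ((tailInt ω r) ^ γ * (1 - t))⁻¹) (Set.Icc r r') := by
          apply ContinuousOn.inv₀
          · exact (continuous_const.mul (continuous_const.sub continuous_id)).continuousOn
          · intro x hx
            have : 0 < 1 - x := by linarith [hx.2]
            positivity
        have : IntegrableOn (fun t => ((tailInt ω r) ^ γ * (1 - t))⁻¹) (Set.Ioo r r') volume :=
          hcont.integrableOn_Icc.mono_set Set.Ioo_subset_Icc_self
        simpa [one_div] using this
      · exact hfint.mono_set hsub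
      · exact measurableSet_Ioo
      · intro x hx
        have hx0 : 0 ≤ x := hr.1.trans hx.1.le
        have hx1 : x < 1 := hx.2.trans hr'1
        have hTx : 0 < tailInt ω x := hpos x ⟨hx0, hx1⟩
        have h1x : 0 < 1 - x := by linarith
        apply one_div_le_one_div_of_le (by positivity)
        apply mul_le_mul_of_nonneg_right _ h1x.le
        exact Real.rpow_le_rpow hTx.le (tail_mono ω hnn hint hr.1 hx.1.le) hγ.le
    have hmono2 : ∫ t in Set.Ioo r r', 1 / ((tailInt ω t) ^ γ * (1 - t))
        ≤ ∫ t in Set.Ioo 0 r', 1 / ((tailInt ω t) ^ γ * (1 - t)) := by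
      apply setIntegral_mono_set hfint
      · refine (ae_restrict_iff' measurableSet_Ioo).2 (Filter.Eventually.of_forall ?_)
        intro x hx
        have hTx : 0 < tailInt ω x := hpos x ⟨hx.1.le, hx.2.trans hr'1⟩
        have h1x : 0 < 1 - x := by linarith [hx.2.trans hr'1]
        positivity
      · exact Filter.Eventually.of_forall fun x hx => ⟨lt_of_le_of_lt hr.1 hx.1, hx.2⟩
    have hchain : 2 * C₁ / (tailInt ω r) ^ γ ≤ C₁ / (tailInt ω r') ^ γ := by
      rw [← hconst]
      exact (hmono1.trans hmono2).trans (h r' ⟨hr'0, hr'1⟩)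
    have h2B : 2 * (tailInt ω r') ^ γ ≤ (tailInt ω r) ^ γ := by
      rw [div_le_div_iff₀ hA hB] at hchain
      nlinarith
    have hfin : ((2:ℝ) ^ γ⁻¹ * tailInt ω r') ^ γ ≤ (tailInt ω r) ^ γ := by
      rw [Real.mul_rpow (by positivity) hTr'.le, ← Real.rpow_mul (by norm_num : (0:ℝ) ≤ 2),
        inv_mul_cancel₀ hγ.ne', Real.rpow_one]
      exact h2B
    exact (Real.rpow_le_rpow_iff (by positivity) hTr.le hγ).1 hfin
  · rintro ⟨K, hK, C, hC, hD⟩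
    have hα : 0 < Real.logb K C := Real.logb_pos hK hC
    set α := Real.logb K C with hαdef
    set β := α * γ with hβdef
    have hβ : 0 < β := mul_pos hα hγ
    have hCg : 0 < C ^ γ := Real.rpow_pos_of_pos (by linarith) γ
    refine ⟨C ^ γ / β, by positivity, ?_⟩
    intro r hr
    have h1r : 0 < 1 - r := by linarith [hr.2]
    have hTr : 0 < tailInt ω r := hpos r hr
    have hd : 0 < (tailInt ω r) ^ γ := Real.rpow_pos_of_pos hTr γ
    have he : 0 < (1 - r) ^ β := Real.rpow_pos_of_pos h1r β
    set c0 : ℝ := C ^ γ * (1 - r) ^ β / (tailInt ω r) ^ γ with hc0def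
    have hc0 : 0 < c0 := by positivity
    have hfint : IntegrableOn (fun t => 1 / ((tailInt ω t) ^ γ * (1 - t))) (Set.Ioo 0 r) :=
      integrand_integrable ω hnn hint hpos hγ hr.1 hr.2
    have hgcont : ContinuousOn (fun t => c0 * (1 - t) ^ (-β - 1)) (Set.Icc 0 r) := by
      apply ContinuousOn.mul continuousOn_const
      apply ContinuousOn.rpow_const
        ((continuous_const.sub continuous_id).continuousOn)
      intro x hx
      left
      have : 0 < 1 - x := by linarith [hx.2]
      exact ne_of_gt this
    have hgint : IntegrableOn (fun t => c0 * (1 - t) ^ (-β - 1)) (Set.Ioo 0 r) volume :=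
      hgcont.integrableOn_Icc.mono_set Set.Ioo_subset_Icc_self
    have hptwise : ∀ t ∈ Set.Ioo (0:ℝ) r,
        1 / ((tailInt ω t) ^ γ * (1 - t)) ≤ c0 * (1 - t) ^ (-β - 1) := by
      intro t htm
      have ht0 : 0 ≤ t := htm.1.le
      have ht1 : t < 1 := htm.2.trans hr.2
      have h1t : 0 < 1 - t := by linarith
      have hTt : 0 < tailInt ω t := hpos t ⟨ht0, ht1⟩
      have ha : 0 < (tailInt ω t) ^ γ := Real.rpow_pos_of_pos hTt γ
      have hb : 0 < (1 - t) ^ β := Real.rpow_pos_of_pos h1t β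
      have hx0 : 0 < (1 - t) / (1 - r) := div_pos h1t h1r
      have hkey := pointwise_bound ω hnn hint hpos hK hC hD ht0 htm.2.le hr.2
      -- raise to power γ
      have hkey2 : (tailInt ω r) ^ γ * ((1 - t) / (1 - r)) ^ β ≤ C ^ γ * (tailInt ω t) ^ γ := by
        have h2 := Real.rpow_le_rpow (by positivity) hkey hγ.le
        rwa [Real.mul_rpow hTr.le (by positivity), Real.mul_rpow (by linarith : (0:ℝ) ≤ C) hTt.le,
          ← Real.rpow_mul hx0.le] at h2
      have e1 : (1 - t) ^ (-β - 1) = ((1 - t) ^ β)⁻¹ / (1 - t) := by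
        rw [Real.rpow_sub h1t, Real.rpow_one, Real.rpow_neg h1t.le]
      have e2 : c0 * (((1 - t) ^ β)⁻¹ / (1 - t))
          = (C ^ γ * (1 - r) ^ β) / ((tailInt ω r) ^ γ * ((1 - t) ^ β * (1 - t))) := by
        rw [hc0def]
        field_simp
      rw [e1, e2, div_le_div_iff₀ (by positivity) (by positivity)]
      have hxβ : ((1 - t) / (1 - r)) ^ β = (1 - t) ^ β / (1 - r) ^ β :=
        Real.div_rpow h1t.le h1r.le β
      rw [hxβ, mul_div_assoc' , div_le_iff₀ he] at hkey2
      nlinarith [mul_le_mul_of_nonneg_right hkey2 h1t.le]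
    have hle := setIntegral_mono_on hfint hgint measurableSet_Ioo hptwise
    have hrint : ∫ t in Set.Ioo 0 r, c0 * (1 - t) ^ (-β - 1)
        = c0 * (((1 - r) ^ (-β) - 1) / β) := by
      rw [integral_const_mul]
      congr 1
      rw [← integral_Ioc_eq_integral_Ioo, ← intervalIntegral.integral_of_le hr.1,
        show (∫ x in (0:ℝ)..r, (1 - x) ^ (-β - 1)) = ∫ x in (1 - r)..(1 - 0), x ^ (-β - 1) from
          intervalIntegral.integral_comp_sub_left (fun u => u ^ (-β - 1)) 1,
        integral_rpow (Or.inr ⟨by intro hcon; simp at hcon; linarith,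
          Set.notMem_uIcc_of_lt (by linarith) (by norm_num)⟩),
        show -β - 1 + 1 = -β by ring, show (1:ℝ) - 0 = 1 by norm_num, Real.one_rpow]
      rw [div_eq_div_iff (by linarith : -β ≠ 0) (by linarith : β ≠ 0)]
      ring
    have hX : (1 - r) ^ β * ((1 - r) ^ (-β) - 1) = 1 - (1 - r) ^ β := by
      rw [mul_sub, ← Real.rpow_add h1r, add_neg_cancel, Real.rpow_zero, mul_one]
    calc (∫ t in Set.Ioo (0:ℝ) r, 1 / ((tailInt ω t) ^ γ * (1 - t)))
        ≤ c0 * (((1 - r) ^ (-β) - 1) / β) := hrint ▸ hle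
      _ = (C ^ γ / β / (tailInt ω r) ^ γ) * ((1 - r) ^ β * ((1 - r) ^ (-β) - 1)) := by
          rw [hc0def]; ring
      _ = (C ^ γ / β / (tailInt ω r) ^ γ) * (1 - (1 - r) ^ β) := by rw [hX]
      _ ≤ (C ^ γ / β / (tailInt ω r) ^ γ) * 1 :=
          mul_le_mul_of_nonneg_left (by linarith) (by positivity)
      _ = C ^ γ / β / (tailInt ω r) ^ γ := mul_one _
end

section
/- Let ω be a nonnegative integrable function on [0,1) with ω̂ > 0 and define L_ω(x) = −log ω_x. Then ω ∈ D̂ if and only if limsup_{x→∞} x·L_ω'(x) < ∞, where L_ω'(x) = (ω_{(1)})_x/ω_x with ω_{(1)}(r) = ω(r)·log(1/r). -/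
open MeasureTheory Set Filter

/-- Logarithmic moment `(ω_(1))_x = ∫_0^1 r^x log(1/r) ω(r) dr`. -/
noncomputable def momLog1 (ω : ℝ → ℝ) (x : ℝ) : ℝ :=
  ∫ r in Set.Ioo (0:ℝ) 1, r ^ x * Real.log (1 / r) * ω r

open Real

lemma two_mul_le_exp {u : ℝ} : 2*u ≤ Real.exp u := by
  rcases le_or_gt u 0 with h | h
  · nlinarith [Real.exp_pos u]
  · have h1 := Real.add_one_le_exp (u/2)
    have h2 : Real.exp u = Real.exp (u/2) * Real.exp (u/2) := by
      rw [← Real.exp_add]; ring_nf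
    nlinarith [Real.exp_pos (u/2), sq_nonneg (u/2 - 1)]

lemma sup_trick {r x : ℝ} (hr0 : 0 < r) (hr1 : r < 1) (hx : 0 < x) :
    x * (r ^ x * Real.log (1/r)) ≤ r ^ (x/2) := by
  have hL : 0 < Real.log (1/r) := by
    apply Real.log_pos; rw [one_div]
    exact (one_lt_inv_iff₀).2 ⟨hr0, hr1⟩
  set u : ℝ := (x/2) * Real.log (1/r) with hu
  have hupos : 0 < u := by positivity
  have hr_exp : r ^ (x/2) = Real.exp (-u) := by
    rw [hu, Real.rpow_def_of_pos hr0]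
    rw [Real.log_div one_ne_zero (ne_of_gt hr0), Real.log_one]
    ring_nf
  have hxx : r ^ x = r ^ (x/2) * r ^ (x/2) := by
    rw [← Real.rpow_add hr0]; ring_nf
  have key : 2*u ≤ Real.exp u := _root_.two_mul_le_exp
  have h2 : x * Real.log (1/r) = 2 * u := by rw [hu]; ring
  rw [hxx, hr_exp]
  have e1 : Real.exp u * Real.exp (-u) = 1 := by rw [← Real.exp_add]; simp
  have hep := Real.exp_pos (-u)
  calc x * (Real.exp (-u) * Real.exp (-u) * Real.log (1/r))
      = (2*u) * Real.exp (-u) * Real.exp (-u) := by rw [mul_comm (2*u)]; rw [← h2]; ring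
    _ ≤ Real.exp u * Real.exp (-u) * Real.exp (-u) := by
        have := mul_le_mul_of_nonneg_right (mul_le_mul_of_nonneg_right key hep.le) hep.le
        linarith
    _ = Real.exp (-u) := by rw [e1, one_mul]

lemma log_inv_pos {r : ℝ} (hr0 : 0 < r) (hr1 : r < 1) : 0 < Real.log (1/r) := by
  apply Real.log_pos; rw [one_div]; exact (one_lt_inv_iff₀).2 ⟨hr0, hr1⟩

section basics
variable {ω : ℝ → ℝ}

lemma int01 (hint : IntegrableOn ω (Set.Ico 0 1)) : IntegrableOn ω (Set.Ioo 0 1) :=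
  hint.mono_set Set.Ioo_subset_Ico_self

lemma aesm_rpow (x : ℝ) :
    AEStronglyMeasurable (fun r : ℝ => r ^ x) (volume.restrict (Set.Ioo 0 1)) := by
  refine ContinuousOn.aestronglyMeasurable ?_ measurableSet_Ioo
  intro r hr
  exact (Real.continuousAt_rpow_const r x (Or.inl (ne_of_gt hr.1))).continuousWithinAt

lemma int_mom (hint : IntegrableOn ω (Set.Ico 0 1)) {x : ℝ} (hx : 0 ≤ x) :
    IntegrableOn (fun r => r ^ x * ω r) (Set.Ioo 0 1) := by
  refine Integrable.mono (int01 hint) ((aesm_rpow x).mul (int01 hint).1) ?_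
  filter_upwards [ae_restrict_mem measurableSet_Ioo] with r hr
  rw [norm_mul, Real.norm_eq_abs, Real.norm_eq_abs, abs_of_nonneg (Real.rpow_nonneg hr.1.le x)]
  nlinarith [abs_nonneg (ω r), Real.rpow_le_one hr.1.le hr.2.le hx,
    Real.rpow_nonneg hr.1.le x]

lemma int_momlog (hint : IntegrableOn ω (Set.Ico 0 1)) {x : ℝ} (hx : 0 < x) :
    IntegrableOn (fun r => r ^ x * Real.log (1/r) * ω r) (Set.Ioo 0 1) := by
  have hmeas : AEStronglyMeasurable (fun r : ℝ => r ^ x * Real.log (1/r) * ω r)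
      (volume.restrict (Set.Ioo 0 1)) := by
    refine AEStronglyMeasurable.mul (AEStronglyMeasurable.mul (aesm_rpow x) ?_) (int01 hint).1
    exact ((Real.measurable_log.comp (measurable_const.div measurable_id)).aestronglyMeasurable)
  refine Integrable.mono (((int01 hint).abs.const_mul (1/x))) hmeas ?_
  filter_upwards [ae_restrict_mem measurableSet_Ioo] with r hr
  have h1 : x * (r ^ x * Real.log (1/r)) ≤ r ^ (x/2) := sup_trick hr.1 hr.2 hx
  have h2 : r ^ (x/2) ≤ 1 := Real.rpow_le_one hr.1.le hr.2.le (by positivity)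
  have h3 : 0 ≤ r ^ x * Real.log (1/r) :=
    mul_nonneg (Real.rpow_nonneg hr.1.le x) (log_inv_pos hr.1 hr.2).le
  have h4 : r ^ x * Real.log (1/r) ≤ 1/x := by
    rw [le_div_iff₀ hx, mul_comm]; linarith
  rw [Real.norm_eq_abs, Real.norm_eq_abs, abs_mul, abs_mul, abs_mul, abs_abs,
    abs_of_nonneg (Real.rpow_nonneg hr.1.le x), abs_of_nonneg (log_inv_pos hr.1 hr.2).le,
    abs_of_nonneg (by positivity : (0:ℝ) ≤ 1/x)]
  exact mul_le_mul_of_nonneg_right h4 (abs_nonneg _)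

lemma tail_nonneg (hnn : ∀ r ∈ Set.Ico (0:ℝ) 1, 0 ≤ ω r) {r : ℝ} (hr : 0 ≤ r) :
    0 ≤ tailInt ω r := by
  apply setIntegral_nonneg measurableSet_Ioo
  intro s hs; exact hnn s ⟨le_trans hr hs.1.le, hs.2⟩

lemma tail_anti (hnn : ∀ r ∈ Set.Ico (0:ℝ) 1, 0 ≤ ω r)
    (hint : IntegrableOn ω (Set.Ico 0 1)) {a b : ℝ} (ha : 0 ≤ a) (hab : a ≤ b) :
    tailInt ω b ≤ tailInt ω a := by
  apply setIntegral_mono_set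
  · exact hint.mono_set (fun s hs => ⟨le_trans ha hs.1.le, hs.2⟩)
  · filter_upwards [ae_restrict_mem measurableSet_Ioo] with s hs
    exact hnn s ⟨le_trans ha hs.1.le, hs.2⟩
  · exact HasSubset.Subset.eventuallyLE (fun s hs => ⟨lt_of_le_of_lt hab hs.1, hs.2⟩)

lemma mom_lower (hnn : ∀ r ∈ Set.Ico (0:ℝ) 1, 0 ≤ ω r)
    (hint : IntegrableOn ω (Set.Ico 0 1)) {t x : ℝ} (ht0 : 0 ≤ t) (ht1 : t < 1)
    (hx : 0 ≤ x) : t ^ x * tailInt ω t ≤ mom ω x := by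
  have hsub : Set.Ioo t 1 ⊆ Set.Ioo (0:ℝ) 1 :=
    fun s hs => ⟨lt_of_le_of_lt ht0 hs.1, hs.2⟩
  have hIok : IntegrableOn (fun r => r ^ x * ω r) (Set.Ioo t 1) :=
    (int_mom hint hx).mono_set hsub
  have hIck : IntegrableOn (fun r => t ^ x * ω r) (Set.Ioo t 1) :=
    ((int01 hint).mono_set hsub).const_mul _
  have key : t ^ x * tailInt ω t ≤ ∫ r in Set.Ioo t 1, r ^ x * ω r := by
    rw [tailInt, ← integral_const_mul]
    refine setIntegral_mono_on hIck hIok measurableSet_Ioo ?_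
    intro r hr
    have h0 := hnn r ⟨(le_trans ht0 hr.1.le), hr.2⟩
    exact mul_le_mul_of_nonneg_right (Real.rpow_le_rpow ht0 hr.1.le hx) h0
  refine le_trans key ?_
  refine setIntegral_mono_set (int_mom hint hx) ?_
    (HasSubset.Subset.eventuallyLE hsub)
  filter_upwards [ae_restrict_mem measurableSet_Ioo] with r hr
  exact mul_nonneg (Real.rpow_nonneg hr.1.le x) (hnn r ⟨hr.1.le, hr.2⟩)

lemma mom_pos (hnn : ∀ r ∈ Set.Ico (0:ℝ) 1, 0 ≤ ω r)
    (hint : IntegrableOn ω (Set.Ico 0 1))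
    (hpos : ∀ r ∈ Set.Ico (0:ℝ) 1, 0 < tailInt ω r) {x : ℝ} (hx : 0 ≤ x) :
    0 < mom ω x := by
  have h2 : (0:ℝ) < (1/2:ℝ) ^ x := Real.rpow_pos_of_pos (by norm_num) x
  have := mom_lower hnn hint (by norm_num : (0:ℝ) ≤ 1/2) (by norm_num) hx
  nlinarith [hpos (1/2) (by norm_num)]

lemma momLog1_nonneg (hnn : ∀ r ∈ Set.Ico (0:ℝ) 1, 0 ≤ ω r) (x : ℝ) :
    0 ≤ momLog1 ω x := by
  apply setIntegral_nonneg measurableSet_Ioo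
  intro r hr
  exact mul_nonneg (mul_nonneg (Real.rpow_nonneg hr.1.le x) (log_inv_pos hr.1 hr.2).le)
    (hnn r ⟨hr.1.le, hr.2⟩)

lemma mom_nonneg (hnn : ∀ r ∈ Set.Ico (0:ℝ) 1, 0 ≤ ω r) (x : ℝ) :
    0 ≤ mom ω x := by
  apply setIntegral_nonneg measurableSet_Ioo
  intro r hr
  exact mul_nonneg (Real.rpow_nonneg hr.1.le x) (hnn r ⟨hr.1.le, hr.2⟩)

-- x * momLog1 x ≤ mom (x/2)
lemma xmomLog1_le (hnn : ∀ r ∈ Set.Ico (0:ℝ) 1, 0 ≤ ω r)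
    (hint : IntegrableOn ω (Set.Ico 0 1)) {x : ℝ} (hx : 0 < x) :
    x * momLog1 ω x ≤ mom ω (x/2) := by
  rw [momLog1, ← integral_const_mul, mom]
  apply setIntegral_mono_on
  · exact (int_momlog hint hx).const_mul x
  · exact int_mom hint (by positivity)
  · exact measurableSet_Ioo
  · intro r hr
    have h0 := hnn r ⟨hr.1.le, hr.2⟩
    have := sup_trick hr.1 hr.2 hx
    calc x * (r ^ x * Real.log (1/r) * ω r) = (x * (r ^ x * Real.log (1/r))) * ω r := by ring
      _ ≤ r ^ (x/2) * ω r := mul_le_mul_of_nonneg_right this h0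

end basics

section fubini
variable {ω : ℝ → ℝ}

-- the dkernel
noncomputable def dker (ω : ℝ → ℝ) (y : ℝ) : ℝ × ℝ → ℝ :=
  fun p => if p.1 < p.2 then y * p.1 ^ (y-1) * ω p.2 else 0

lemma dker_eq_indicator (y : ℝ) :
    dker ω y = Set.indicator {p : ℝ × ℝ | p.1 < p.2} (fun p => y * p.1 ^ (y-1) * ω p.2) := by
  ext p; by_cases h : p.1 < p.2
  · rw [Set.indicator_of_mem (by exact h)]; simp [dker, h]
  · rw [Set.indicator_of_notMem (by exact h)]; simp [dker, h]

lemma dker_int (hint : IntegrableOn ω (Set.Ico 0 1)) {y : ℝ} (hy : 1 ≤ y) :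
    Integrable (dker ω y)
      ((volume.restrict (Set.Ioo (0:ℝ) 1)).prod (volume.restrict (Set.Ioo (0:ℝ) 1))) := by
  set μ := volume.restrict (Set.Ioo (0:ℝ) 1)
  have hmeas : AEStronglyMeasurable (dker ω y) (μ.prod μ) := by
    rw [dker_eq_indicator]
    refine AEStronglyMeasurable.indicator ?_ (measurableSet_lt measurable_fst measurable_snd)
    exact ((measurable_fst.pow_const _).const_mul y).aestronglyMeasurable.mul
      ((int01 hint).1.comp_snd)
  refine Integrable.mono' (g := fun p => y * |ω p.2|) ?_ hmeas ?_
  · exact Integrable.mul_prod (integrable_const y) (int01 hint).abs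
  · have : μ.prod μ = (volume.prod volume).restrict ((Set.Ioo (0:ℝ) 1) ×ˢ (Set.Ioo (0:ℝ) 1)) :=
      Measure.prod_restrict _ _
    rw [this]
    filter_upwards [ae_restrict_mem (measurableSet_Ioo.prod measurableSet_Ioo)] with p hp
    have h1 : 0 ≤ p.1 ^ (y-1) := Real.rpow_nonneg hp.1.1.le _
    have h2 : p.1 ^ (y-1) ≤ 1 := Real.rpow_le_one hp.1.1.le hp.1.2.le (by linarith)
    have hy0 : (0:ℝ) ≤ y := by linarith
    rcases lt_or_ge p.1 p.2 with h | h
    · simp only [dker, if_pos h]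
      rw [Real.norm_eq_abs, abs_mul, abs_mul, abs_of_nonneg hy0, abs_of_nonneg h1]
      calc y * p.1 ^ (y-1) * |ω p.2| ≤ y * 1 * |ω p.2| := by
            exact mul_le_mul_of_nonneg_right (mul_le_mul_of_nonneg_left h2 hy0)
              (abs_nonneg (ω p.2))
        _ = y * |ω p.2| := by ring
    · simp only [dker, if_neg (not_lt.2 h), norm_zero]
      positivity
end fubini

section fub2
variable {ω : ℝ → ℝ}

lemma inner_r {y s : ℝ} (hs : s ∈ Set.Ioo (0:ℝ) 1) :
    ∫ r in Set.Ioo (0:ℝ) 1, dker ω y (s, r) = y * s ^ (y-1) * tailInt ω s := by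
  have h1 : (fun r => dker ω y (s, r)) =
      (Set.Ioi s).indicator (fun r => y * s ^ (y-1) * ω r) := by
    ext r; by_cases h : s < r
    · rw [Set.indicator_of_mem (by exact h)]; simp [dker, h]
    · rw [Set.indicator_of_notMem (by exact h)]; simp [dker, h]
  rw [h1, setIntegral_indicator measurableSet_Ioi]
  have h2 : Set.Ioo (0:ℝ) 1 ∩ Set.Ioi s = Set.Ioo s 1 := by
    ext r
    constructor
    · rintro ⟨⟨_, h2⟩, h3⟩; exact ⟨h3, h2⟩
    · rintro ⟨h2, h3⟩; exact ⟨⟨lt_trans hs.1 h2, h3⟩, h2⟩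
  rw [h2, tailInt, integral_const_mul]

lemma inner_s {y r : ℝ} (hy : 0 < y) (hr : r ∈ Set.Ioo (0:ℝ) 1) :
    ∫ s in Set.Ioo (0:ℝ) 1, dker ω y (s, r) = r ^ y * ω r := by
  have h1 : (fun s => dker ω y (s, r)) =
      (Set.Iio r).indicator (fun s => y * s ^ (y-1) * ω r) := by
    ext s; by_cases h : s < r
    · rw [Set.indicator_of_mem (by exact h)]; simp [dker, h]
    · rw [Set.indicator_of_notMem (by exact h)]; simp [dker, h]
  rw [h1, setIntegral_indicator measurableSet_Iio]
  have h2 : Set.Ioo (0:ℝ) 1 ∩ Set.Iio r = Set.Ioo 0 r := by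
    ext s
    constructor
    · rintro ⟨⟨h1', _⟩, h3⟩; exact ⟨h1', h3⟩
    · rintro ⟨h2', h3⟩; exact ⟨⟨h2', lt_trans h3 hr.2⟩, h3⟩
  rw [h2]
  have h3 : ∫ s in Set.Ioo (0:ℝ) r, y * s ^ (y-1) * ω r
      = (∫ s in (0:ℝ)..r, y * s ^ (y-1)) * ω r := by
    rw [intervalIntegral.integral_of_le hr.1.le, ← integral_Ioc_eq_integral_Ioo,
      ← integral_mul_const]
  rw [h3, intervalIntegral.integral_const_mul, integral_rpow (Or.inl (by linarith))]
  rw [Real.zero_rpow (by intro h; rw [show y - 1 + 1 = y by ring] at h; linarith)]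
  have : y - 1 + 1 = y := by ring
  rw [this]
  field_simp
  ring

lemma mom_eq_tail (hint : IntegrableOn ω (Set.Ico 0 1)) {y : ℝ} (hy : 1 ≤ y) :
    mom ω y = ∫ s in Set.Ioo (0:ℝ) 1, y * s ^ (y-1) * tailInt ω s := by
  have hswap := integral_integral_swap (f := fun s r => dker ω y (s, r)) (dker_int hint hy)
  have hL : ∫ s in Set.Ioo (0:ℝ) 1, (∫ r in Set.Ioo (0:ℝ) 1, dker ω y (s, r))
      = ∫ s in Set.Ioo (0:ℝ) 1, y * s ^ (y-1) * tailInt ω s :=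
    setIntegral_congr_fun measurableSet_Ioo (fun s hs => inner_r hs)
  have hR : ∫ r in Set.Ioo (0:ℝ) 1, (∫ s in Set.Ioo (0:ℝ) 1, dker ω y (s, r))
      = mom ω y :=
    setIntegral_congr_fun measurableSet_Ioo (fun r hr => inner_s (by linarith) hr)
  rw [← hL, ← hR]
  exact hswap.symm

lemma tail_ker_int (hint : IntegrableOn ω (Set.Ico 0 1)) {y : ℝ} (hy : 1 ≤ y) :
    IntegrableOn (fun s => y * s ^ (y-1) * tailInt ω s) (Set.Ioo (0:ℝ) 1) := by
  have h := (dker_int hint hy).integral_prod_left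
  refine h.congr ?_
  filter_upwards [ae_restrict_mem measurableSet_Ioo] with s hs
  exact inner_r hs
end fub2



lemma integrableOn_pow_exp (k : ℕ) {c : ℝ} (hc : 0 < c) :
    IntegrableOn (fun v : ℝ => v ^ k * Real.exp (-c * v)) (Set.Ioi 0) := by
  have h := integrableOn_rpow_mul_exp_neg_mul_rpow (p := 1) (s := (k:ℝ)) (b := c)
    (lt_of_lt_of_le neg_one_lt_zero (Nat.cast_nonneg k)) one_pos hc
  refine (h.congr_fun (fun v hv => ?_) measurableSet_Ioi)
  beta_reduce
  rw [Real.rpow_natCast, Real.rpow_one]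

lemma integral_pow_exp (k : ℕ) {c : ℝ} (hc : 0 < c) :
    ∫ v in Set.Ioi (0:ℝ), v ^ k * Real.exp (-c * v) = k.factorial / c ^ (k+1) := by
  have h := integral_rpow_mul_exp_neg_mul_rpow (p := 1) (q := (k:ℝ)) (b := c)
    (by norm_num) (lt_of_lt_of_le neg_one_lt_zero (Nat.cast_nonneg k)) hc
  have heq : ∫ v in Set.Ioi (0:ℝ), v ^ k * Real.exp (-c * v)
      = ∫ v in Set.Ioi (0:ℝ), v ^ (k:ℝ) * Real.exp (-c * v ^ (1:ℝ)) := by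
    refine setIntegral_congr_fun measurableSet_Ioi (fun v hv => ?_)
    rw [Real.rpow_natCast, Real.rpow_one]
  rw [heq, h]
  have h2 : ((k:ℝ) + 1) / 1 = ((k+1 : ℕ) : ℝ) := by push_cast; ring
  have h3 : Real.Gamma (((k:ℝ)+1)/1) = (k.factorial : ℝ) := by
    rw [show ((k:ℝ)+1)/1 = (k:ℝ)+1 by ring, Real.Gamma_nat_eq_factorial]
  rw [h3]
  have h4 : c ^ (-((k:ℝ) + 1) / 1) = (c ^ (k+1 : ℕ))⁻¹ := by
    rw [show (-((k:ℝ)+1)/1) = -((k:ℝ)+1) by ring, Real.rpow_neg hc.le]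
    congr 1
    rw [show ((k:ℝ)+1) = ((k+1:ℕ):ℝ) by push_cast; ring, Real.rpow_natCast]
  rw [h4]
  field_simp

noncomputable def KG (n : ℕ) : ℝ :=
  ∑ k ∈ Finset.range (n+1), (n.choose k : ℝ) * 2^k * (k.factorial : ℝ) * 2^(k+1)

lemma g_expand (n : ℕ) (y v : ℝ) :
    Real.exp (-(y-1)*v) * (2*y*v+1)^n
      = ∑ k ∈ Finset.range (n+1), (n.choose k : ℝ) * (2*y)^k * (v^k * Real.exp (-(y-1)*v)) := by
  rw [add_pow]
  rw [Finset.mul_sum]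
  refine Finset.sum_congr rfl (fun k hk => ?_)
  rw [one_pow, mul_pow]
  ring

lemma g_int (n : ℕ) {y : ℝ} (hy : 2 ≤ y) :
    IntegrableOn (fun v => Real.exp (-(y-1)*v) * (2*y*v+1)^n) (Set.Ioi (0:ℝ)) := by
  have : ∀ v : ℝ, Real.exp (-(y-1)*v) * (2*y*v+1)^n
      = ∑ k ∈ Finset.range (n+1), (n.choose k : ℝ) * (2*y)^k * (v^k * Real.exp (-(y-1)*v)) :=
    fun v => g_expand n y v
  rw [show (fun v => Real.exp (-(y-1)*v) * (2*y*v+1)^n)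
      = fun v => ∑ k ∈ Finset.range (n+1), (n.choose k : ℝ) * (2*y)^k
          * (v^k * Real.exp (-(y-1)*v)) from funext this]
  apply integrable_finset_sum
  intro k hk
  exact ((integrableOn_pow_exp k (by linarith : (0:ℝ) < y-1)).const_mul _)

lemma g_integral_le (n : ℕ) {y : ℝ} (hy : 2 ≤ y) :
    y * ∫ v in Set.Ioi (0:ℝ), Real.exp (-(y-1)*v) * (2*y*v+1)^n ≤ KG n := by
  have hc : (0:ℝ) < y - 1 := by linarith
  have heq : ∫ v in Set.Ioi (0:ℝ), Real.exp (-(y-1)*v) * (2*y*v+1)^n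
      = ∑ k ∈ Finset.range (n+1), (n.choose k : ℝ) * (2*y)^k * ((k.factorial : ℝ) / (y-1)^(k+1)) := by
    rw [show (fun v => Real.exp (-(y-1)*v) * (2*y*v+1)^n)
        = fun v => ∑ k ∈ Finset.range (n+1), (n.choose k : ℝ) * (2*y)^k
            * (v^k * Real.exp (-(y-1)*v)) from funext (fun v => g_expand n y v)]
    rw [integral_finset_sum _ (fun k hk =>
      (integrableOn_pow_exp k hc).const_mul ((n.choose k : ℝ) * (2*y)^k))]
    refine Finset.sum_congr rfl (fun k hk => ?_)
    rw [integral_const_mul, integral_pow_exp k hc]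
  rw [heq, Finset.mul_sum, KG]
  refine Finset.sum_le_sum (fun k hk => ?_)
  have hpos : (0:ℝ) < (y-1)^(k+1) := by positivity
  have hyp : y^(k+1) ≤ 2^(k+1) * (y-1)^(k+1) := by
    have h1 : y ≤ 2*(y-1) := by linarith
    calc y^(k+1) ≤ (2*(y-1))^(k+1) := pow_le_pow_left₀ (by linarith) h1 _
      _ = 2^(k+1) * (y-1)^(k+1) := mul_pow _ _ _
  have hterm : y * ((n.choose k : ℝ) * (2*y)^k * ((k.factorial : ℝ) / (y-1)^(k+1)))
      = ((n.choose k : ℝ) * 2^k * (k.factorial : ℝ)) * (y^(k+1) / (y-1)^(k+1)) := by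
    rw [mul_pow]
    field_simp
    ring
  rw [hterm]
  refine mul_le_mul_of_nonneg_left ?_ (by positivity)
  rw [div_le_iff₀ hpos]
  linarith [hyp]

lemma lemG (n : ℕ) {y : ℝ} (hy : 2 ≤ y) :
    y * ∫ s in Set.Ioo (0:ℝ) 1, s ^ (y-1) * (2*y*(1-s)+1)^n ≤ KG n := by
  have hy0 : (0:ℝ) < y := by linarith
  set f2 : ℝ → ℝ := fun s => Real.exp (-(y-1)*(1-s)) * (2*y*(1-s)+1)^n with hf2
  have hf2cont : Continuous f2 := by
    apply Continuous.mul
    · exact (Real.continuous_exp.comp (by continuity))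
    · exact (by continuity : Continuous fun s : ℝ => (2*y*(1-s)+1)^n)
  have hf2int : IntegrableOn f2 (Set.Ioo (0:ℝ) 1) :=
    (hf2cont.integrableOn_Icc).mono_set Set.Ioo_subset_Icc_self
  have hf1int : IntegrableOn (fun s => s ^ (y-1) * (2*y*(1-s)+1)^n) (Set.Ioo (0:ℝ) 1) := by
    refine Integrable.mono' (g := fun s => (2*y+1)^n) (integrable_const _)
      ((aesm_rpow (y-1)).mul (by continuity : Continuous fun s : ℝ => (2*y*(1-s)+1)^n).aestronglyMeasurable) ?_
    filter_upwards [ae_restrict_mem measurableSet_Ioo] with s hs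
    have h1 : 0 ≤ s ^ (y-1) := Real.rpow_nonneg hs.1.le _
    have h2 : s ^ (y-1) ≤ 1 := Real.rpow_le_one hs.1.le hs.2.le (by linarith)
    have h3 : (0:ℝ) ≤ 2*y*(1-s)+1 := by nlinarith [hs.2.le]
    have h4 : 2*y*(1-s)+1 ≤ 2*y+1 := by nlinarith [hs.1.le]
    rw [Real.norm_eq_abs, abs_mul, abs_of_nonneg h1, abs_of_nonneg (pow_nonneg h3 n)]
    calc s ^ (y-1) * (2*y*(1-s)+1)^n ≤ 1 * (2*y+1)^n := by
          exact mul_le_mul h2 (pow_le_pow_left₀ h3 h4 n) (pow_nonneg h3 n) zero_le_one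
      _ = (2*y+1)^n := one_mul _
  have step1 : ∫ s in Set.Ioo (0:ℝ) 1, s ^ (y-1) * (2*y*(1-s)+1)^n
      ≤ ∫ s in Set.Ioo (0:ℝ) 1, f2 s := by
    refine setIntegral_mono_on hf1int hf2int measurableSet_Ioo ?_
    intro s hs
    have h3 : (0:ℝ) ≤ 2*y*(1-s)+1 := by nlinarith [hs.2.le]
    refine mul_le_mul_of_nonneg_right ?_ (pow_nonneg h3 n)
    rw [Real.rpow_def_of_pos hs.1]
    apply Real.exp_le_exp.2
    have := Real.log_le_sub_one_of_pos hs.1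
    nlinarith [this]
  set g : ℝ → ℝ := fun v => Real.exp (-(y-1)*v) * (2*y*v+1)^n with hg
  have step2 : ∫ s in Set.Ioo (0:ℝ) 1, f2 s = ∫ v in Set.Ioo (0:ℝ) 1, g v := by
    have e1 : ∫ s in Set.Ioo (0:ℝ) 1, f2 s = ∫ s in (0:ℝ)..1, g (1-s) := by
      rw [intervalIntegral.integral_of_le zero_le_one, ← integral_Ioc_eq_integral_Ioo]
    have e2 : ∫ s in (0:ℝ)..1, g (1-s) = ∫ v in (1-(1:ℝ))..(1-(0:ℝ)), g v :=
      intervalIntegral.integral_comp_sub_left g 1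
    rw [e1, e2]
    norm_num
    rw [intervalIntegral.integral_of_le zero_le_one, ← integral_Ioc_eq_integral_Ioo]
  have step3 : ∫ v in Set.Ioo (0:ℝ) 1, g v ≤ ∫ v in Set.Ioi (0:ℝ), g v := by
    refine setIntegral_mono_set (g_int n hy) ?_
      (HasSubset.Subset.eventuallyLE (fun v hv => hv.1))
    filter_upwards [ae_restrict_mem measurableSet_Ioi] with v hv
    have h3 : (0:ℝ) ≤ 2*y*v+1 := by nlinarith [le_of_lt (Set.mem_Ioi.1 hv)]
    positivity
  have := g_integral_le n hy
  have hmono : ∫ s in Set.Ioo (0:ℝ) 1, s ^ (y-1) * (2*y*(1-s)+1)^n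
      ≤ ∫ v in Set.Ioi (0:ℝ), g v := by
    rw [step2] at step1; linarith
  calc y * ∫ s in Set.Ioo (0:ℝ) 1, s ^ (y-1) * (2*y*(1-s)+1)^n
      ≤ y * ∫ v in Set.Ioi (0:ℝ), g v := mul_le_mul_of_nonneg_left hmono hy0.le
    _ ≤ KG n := this

section dbl
variable {ω : ℝ → ℝ} {C : ℝ}

variable {ω : ℝ → ℝ} {C : ℝ}

lemma tail_iter (hC1 : 1 ≤ C)
    (hdbl : ∀ r ∈ Set.Ico (0:ℝ) 1, tailInt ω r ≤ C * tailInt ω ((1 + r) / 2)) :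
    ∀ m : ℕ, ∀ s ∈ Set.Ico (0:ℝ) 1,
      tailInt ω s ≤ C ^ m * tailInt ω (1 - (1-s)/2^m) := by
  intro m
  induction m with
  | zero => intro s hs; simp
  | succ m ih =>
    intro s hs
    have h1 := ih s hs
    set p : ℝ := 1 - (1-s)/2^m with hp
    have hpmem : p ∈ Set.Ico (0:ℝ) 1 := by
      constructor
      · have h2 : (1-s)/2^m ≤ 1 - s := by
          apply div_le_self (by linarith [hs.2]) (one_le_pow₀ (by norm_num))
        simp only [hp]; linarith [hs.1]
      · have : (0:ℝ) < (1-s)/2^m := by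
          apply div_pos (by linarith [hs.2]) (by positivity)
        simp only [hp]; linarith
    have h2 := hdbl p hpmem
    have h3 : (1 + p)/2 = 1 - (1-s)/2^(m+1) := by
      simp only [hp]; field_simp; ring
    rw [h3] at h2
    calc tailInt ω s ≤ C ^ m * tailInt ω p := h1
      _ ≤ C ^ m * (C * tailInt ω (1 - (1-s)/2^(m+1))) := by
          refine mul_le_mul_of_nonneg_left h2 (by positivity)
      _ = C ^ (m+1) * tailInt ω (1 - (1-s)/2^(m+1)) := by ring

lemma tail_poly (hnn : ∀ r ∈ Set.Ico (0:ℝ) 1, 0 ≤ ω r)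
    (hint : IntegrableOn ω (Set.Ico 0 1)) (hC1 : 1 ≤ C)
    (hdbl : ∀ r ∈ Set.Ico (0:ℝ) 1, tailInt ω r ≤ C * tailInt ω ((1 + r) / 2))
    {n : ℕ} (hCn : C ≤ 2^n) {x : ℝ} (hx : 1 ≤ x) {s : ℝ} (hs : s ∈ Set.Ico (0:ℝ) 1) :
    tailInt ω s ≤ 2^n * (x*(1-s)+1)^n * tailInt ω (1 - 1/x) := by
  have hx0 : (0:ℝ) < x := by linarith
  have ht0 : (0:ℝ) ≤ 1 - 1/x := by
    have : 1/x ≤ 1 := by rw [div_le_one hx0]; linarith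
    linarith
  have ht1 : 1 - 1/x < 1 := by
    have : 0 < 1/x := by positivity
    linarith
  have htail0 : 0 ≤ tailInt ω (1 - 1/x) := tail_nonneg hnn ht0
  have hbase1 : (1:ℝ) ≤ x*(1-s)+1 := by nlinarith [hs.2.le, hx0]
  have hfac1 : (1:ℝ) ≤ 2^n * (x*(1-s)+1)^n := by
    have h1 : (1:ℝ) ≤ (x*(1-s)+1)^n := one_le_pow₀ hbase1
    have h2 : (1:ℝ) ≤ (2:ℝ)^n := one_le_pow₀ one_le_two
    nlinarith
  rcases le_or_gt (1 - 1/x) s with hcase | hcase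
  · -- s ≥ t : monotonicity
    have h1 : tailInt ω s ≤ tailInt ω (1 - 1/x) := tail_anti hnn hint ht0 hcase
    nlinarith
  · -- s < t
    have hxs1 : 1 < x*(1-s) := by
      have h1 : 1 - s > 1/x := by linarith
      calc (1:ℝ) = x * (1/x) := by field_simp
        _ < x * (1-s) := by exact mul_lt_mul_of_pos_left h1 hx0
    set m : ℕ := ⌈Real.logb 2 (x*(1-s))⌉₊ with hm
    have hlogb0 : 0 ≤ Real.logb 2 (x*(1-s)) := Real.logb_nonneg one_lt_two hxs1.le
    have h2m : x*(1-s) ≤ 2^m := by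
      have := Nat.le_ceil (Real.logb 2 (x*(1-s)))
      calc x*(1-s) = (2:ℝ) ^ (Real.logb 2 (x*(1-s))) := by
            rw [Real.rpow_logb two_pos (by norm_num) (by linarith)]
        _ ≤ (2:ℝ) ^ (m:ℝ) := by
            exact Real.rpow_le_rpow_of_exponent_le one_le_two this
        _ = 2^m := by rw [Real.rpow_natCast]
    have h2m' : (2:ℝ)^m ≤ 2*(x*(1-s)) := by
      have hceil : (m:ℝ) < Real.logb 2 (x*(1-s)) + 1 := by
        exact Nat.ceil_lt_add_one hlogb0
      calc (2:ℝ)^m = (2:ℝ)^(m:ℝ) := by rw [Real.rpow_natCast]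
        _ ≤ (2:ℝ)^(Real.logb 2 (x*(1-s)) + 1) := by
            exact Real.rpow_le_rpow_of_exponent_le one_le_two hceil.le
        _ = 2*(x*(1-s)) := by
            rw [Real.rpow_add two_pos, Real.rpow_logb two_pos (by norm_num) (by linarith),
              Real.rpow_one]
            ring
    have hiter := tail_iter hC1 hdbl m s hs
    set p : ℝ := 1 - (1-s)/2^m with hp
    have hpt : 1 - 1/x ≤ p := by
      have h1 : (1-s)/2^m ≤ 1/x := by
        rw [div_le_div_iff₀ (by positivity) hx0]
        calc (1-s) * x = x*(1-s) := by ring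
          _ ≤ 2^m := h2m
          _ = 1 * 2^m := (one_mul _).symm
      simp only [hp]; linarith
    have hp1 : p < 1 := by
      have : (0:ℝ) < (1-s)/2^m := div_pos (by linarith [hs.2]) (by positivity)
      simp only [hp]; linarith
    have htp : tailInt ω p ≤ tailInt ω (1 - 1/x) := tail_anti hnn hint ht0 hpt
    have hCm : C^m ≤ 2^n * (x*(1-s)+1)^n := by
      calc C^m ≤ ((2:ℝ)^n)^m := pow_le_pow_left₀ (by linarith) hCn m
        _ = ((2:ℝ)^m)^n := by rw [← pow_mul, ← pow_mul, Nat.mul_comm]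
        _ ≤ (2*(x*(1-s)))^n := pow_le_pow_left₀ (by positivity) h2m' n
        _ ≤ (2*(x*(1-s)+1))^n := by
            refine pow_le_pow_left₀ (by nlinarith) (by nlinarith) n
        _ = 2^n * (x*(1-s)+1)^n := mul_pow _ _ _
    calc tailInt ω s ≤ C^m * tailInt ω p := hiter
      _ ≤ C^m * tailInt ω (1 - 1/x) := mul_le_mul_of_nonneg_left htp (by positivity)
      _ ≤ 2^n * (x*(1-s)+1)^n * tailInt ω (1 - 1/x) :=
          mul_le_mul_of_nonneg_right hCm htail0
end dbl

section dir1
variable {ω : ℝ → ℝ} {C : ℝ}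

lemma KG_nonneg (n : ℕ) : 0 ≤ KG n := by
  refine Finset.sum_nonneg (fun k hk => ?_)
  positivity

lemma int_poly {y : ℝ} (hy : 1 ≤ y) (n : ℕ) :
    IntegrableOn (fun s => s ^ (y-1) * (2*y*(1-s)+1)^n) (Set.Ioo (0:ℝ) 1) := by
  have hy0 : (0:ℝ) < y := by linarith
  refine Integrable.mono' (g := fun s => (2*y+1)^n) (integrable_const _)
    ((aesm_rpow (y-1)).mul (by continuity : Continuous fun s : ℝ => (2*y*(1-s)+1)^n).aestronglyMeasurable) ?_
  filter_upwards [ae_restrict_mem measurableSet_Ioo] with s hs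
  have h1 : 0 ≤ s ^ (y-1) := Real.rpow_nonneg hs.1.le _
  have h2 : s ^ (y-1) ≤ 1 := Real.rpow_le_one hs.1.le hs.2.le (by linarith)
  have h3 : (0:ℝ) ≤ 2*y*(1-s)+1 := by nlinarith [hs.2.le]
  have h4 : 2*y*(1-s)+1 ≤ 2*y+1 := by nlinarith [hs.1.le]
  rw [Real.norm_eq_abs, abs_mul, abs_of_nonneg h1, abs_of_nonneg (pow_nonneg h3 n)]
  calc s ^ (y-1) * (2*y*(1-s)+1)^n ≤ 1 * (2*y+1)^n :=
        mul_le_mul h2 (pow_le_pow_left₀ h3 h4 n) (pow_nonneg h3 n) zero_le_one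
    _ = (2*y+1)^n := one_mul _

lemma texp_lower {x : ℝ} (hx : 2 ≤ x) : (1:ℝ)/8 ≤ (1 - 1/x) ^ x := by
  have hx0 : (0:ℝ) < x := by linarith
  have ht0 : (0:ℝ) < 1 - 1/x := by
    have : 1/x ≤ 1/2 := by rw [div_le_div_iff₀ hx0 two_pos]; linarith
    linarith
  set t : ℝ := 1 - 1/x with htdef
  have hlog : Real.log t * x ≥ -2 := by
    have h1 : Real.log t⁻¹ ≤ t⁻¹ - 1 := Real.log_le_sub_one_of_pos (by positivity)
    rw [Real.log_inv] at h1
    have h2 : t⁻¹ - 1 = (1-t)/t := by field_simp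
    have hxne : x ≠ 0 := hx0.ne'
    have hx1ne : x - 1 ≠ 0 := by intro h; rw [sub_eq_zero] at h; linarith [h.symm.le, h.symm.ge]
    have htne : t ≠ 0 := ht0.ne'
    have h3 : (1-t)/t = 1/(x-1) := by
      rw [div_eq_div_iff htne hx1ne]
      simp only [htdef]
      field_simp
      ring
    have h4 : 1/(x-1) ≤ 2/x := by
      rw [div_le_div_iff₀ (by linarith : (0:ℝ) < x-1) hx0]
      linarith
    have h5 : -Real.log t ≤ 2/x := by
      rw [h2, h3] at h1; linarith
    have h6 : -(Real.log t) * x ≤ (2/x) * x :=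
      mul_le_mul_of_nonneg_right h5 hx0.le
    have h7 : (2/x) * x = 2 := by field_simp
    nlinarith
  have hexp2 : Real.exp 2 ≤ 8 := by
    have h := Real.exp_one_lt_d9
    have h2 : Real.exp 2 = Real.exp 1 * Real.exp 1 := by
      rw [← Real.exp_add]; norm_num
    nlinarith [Real.exp_pos 1]
  rw [Real.rpow_def_of_pos ht0]
  have h8 : Real.exp (-2) ≤ Real.exp (Real.log t * x) := Real.exp_le_exp.2 (by linarith)
  have h9 : Real.exp (-2) = 1 / Real.exp 2 := by
    rw [Real.exp_neg]; field_simp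
  have h10 : (1:ℝ)/8 ≤ 1/Real.exp 2 := by
    rw [div_le_div_iff₀ (by norm_num) (Real.exp_pos 2)]; linarith
  linarith

lemma dir1 (hnn : ∀ r ∈ Set.Ico (0:ℝ) 1, 0 ≤ ω r)
    (hint : IntegrableOn ω (Set.Ico 0 1))
    (hpos : ∀ r ∈ Set.Ico (0:ℝ) 1, 0 < tailInt ω r)
    (hC1 : 1 ≤ C)
    (hdbl : ∀ r ∈ Set.Ico (0:ℝ) 1, tailInt ω r ≤ C * tailInt ω ((1 + r) / 2)) :
    Filter.IsBoundedUnder (· ≤ ·) Filter.atTop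
      (fun x : ℝ => x * (momLog1 ω x / mom ω x)) := by
  obtain ⟨n0, hn0⟩ := exists_nat_ge C
  have hCn : C ≤ (2:ℝ)^n0 := by
    refine le_trans hn0 ?_
    have := Nat.lt_two_pow_self (n := n0)
    calc (n0:ℝ) ≤ ((2^n0 : ℕ):ℝ) := by exact_mod_cast this.le
      _ = (2:ℝ)^n0 := by push_cast; ring
  set n := n0
  set b : ℝ := 8 * (2^n * KG n) with hb
  refine ⟨b, ?_⟩
  rw [Filter.eventually_map]
  rw [Filter.eventually_atTop]
  refine ⟨4, fun x hx => ?_⟩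
  -- setup
  have hx0 : (0:ℝ) < x := by linarith
  have hx1 : (1:ℝ) ≤ x := by linarith
  have hx2 : (2:ℝ) ≤ x := by linarith
  set y : ℝ := x/2 with hydef
  have hy1 : (1:ℝ) ≤ y := by simp only [hydef]; linarith
  have hy2 : (2:ℝ) ≤ y := by simp only [hydef]; linarith
  have hxy : x = 2*y := by simp only [hydef]; ring
  set t : ℝ := 1 - 1/x with htdef
  have ht0 : (0:ℝ) ≤ t := by
    have : 1/x ≤ 1 := by rw [div_le_one hx0]; linarith
    simp only [htdef]; linarith
  have ht1 : t < 1 := by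
    have : 0 < 1/x := by positivity
    simp only [htdef]; linarith
  have htail0 : 0 ≤ tailInt ω t := tail_nonneg hnn ht0
  have hmompos : 0 < mom ω x := mom_pos hnn hint hpos (by linarith)
  -- step 1
  have h1 : x * momLog1 ω x ≤ mom ω y := xmomLog1_le hnn hint hx0
  -- step 2 : identity
  have h2 : mom ω y = ∫ s in Set.Ioo (0:ℝ) 1, y * s ^ (y-1) * tailInt ω s :=
    mom_eq_tail hint hy1
  -- step 3 : compare
  set c : ℝ := 2^n * tailInt ω t * y with hc
  have hc0 : 0 ≤ c := by positivity
  have h3 : (∫ s in Set.Ioo (0:ℝ) 1, y * s ^ (y-1) * tailInt ω s)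
      ≤ ∫ s in Set.Ioo (0:ℝ) 1, c * (s ^ (y-1) * (2*y*(1-s)+1)^n) := by
    refine setIntegral_mono_on (tail_ker_int hint hy1) ((int_poly hy1 n).const_mul c)
      measurableSet_Ioo ?_
    intro s hs
    have hpoly := tail_poly hnn hint hC1 hdbl hCn hx1 (⟨hs.1.le, hs.2⟩ : s ∈ Set.Ico (0:ℝ) 1)
    rw [← htdef] at hpoly
    have hsy : 0 ≤ y * s ^ (y-1) := by
      have := Real.rpow_nonneg hs.1.le (y-1); positivity
    calc y * s ^ (y-1) * tailInt ω s
        ≤ y * s ^ (y-1) * (2^n * (x*(1-s)+1)^n * tailInt ω t) := by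
          exact mul_le_mul_of_nonneg_left hpoly hsy
      _ = c * (s ^ (y-1) * (2*y*(1-s)+1)^n) := by
          rw [hxy]; simp only [hc]; ring
  -- step 4 : evaluate RHS
  have h4 : (∫ s in Set.Ioo (0:ℝ) 1, c * (s ^ (y-1) * (2*y*(1-s)+1)^n))
      ≤ 2^n * KG n * tailInt ω t := by
    rw [integral_const_mul]
    have hle := lemG n hy2
    have e1 : c * ∫ s in Set.Ioo (0:ℝ) 1, s ^ (y-1) * (2*y*(1-s)+1)^n
        = (2^n * tailInt ω t) * (y * ∫ s in Set.Ioo (0:ℝ) 1, s ^ (y-1) * (2*y*(1-s)+1)^n) := by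
      simp only [hc]; ring
    rw [e1]
    calc (2^n * tailInt ω t) * (y * ∫ s in Set.Ioo (0:ℝ) 1, s ^ (y-1) * (2*y*(1-s)+1)^n)
        ≤ (2^n * tailInt ω t) * KG n := by
          refine mul_le_mul_of_nonneg_left hle (by positivity)
      _ = 2^n * KG n * tailInt ω t := by ring
  -- step 5 : tail t ≤ 8 mom x
  have h5 : tailInt ω t ≤ 8 * mom ω x := by
    have hml := mom_lower hnn hint ht0 ht1 (by linarith : (0:ℝ) ≤ x)
    have hlt := texp_lower hx2
    rw [← htdef] at hlt
    nlinarith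
  -- combine
  have key : x * momLog1 ω x ≤ b * mom ω x := by
    have h6 : x * momLog1 ω x ≤ 2^n * KG n * tailInt ω t := by linarith
    have h7 : 2^n * KG n * tailInt ω t ≤ 2^n * KG n * (8 * mom ω x) := by
      refine mul_le_mul_of_nonneg_left h5 ?_
      have := KG_nonneg n; positivity
    simp only [hb]
    nlinarith
  show x * (momLog1 ω x / mom ω x) ≤ b
  rw [mul_div_assoc']
  rw [div_le_iff₀ hmompos]
  linarith [key]
end dir1

section dir2
variable {ω : ℝ → ℝ}

lemma mom_anti (hnn : ∀ r ∈ Set.Ico (0:ℝ) 1, 0 ≤ ω r)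
    (hint : IntegrableOn ω (Set.Ico 0 1)) {u v : ℝ} (hu : 0 ≤ u) (huv : u ≤ v) :
    mom ω v ≤ mom ω u := by
  refine setIntegral_mono_on (int_mom hint (by linarith)) (int_mom hint hu)
    measurableSet_Ioo ?_
  intro r hr
  refine mul_le_mul_of_nonneg_right ?_ (hnn r ⟨hr.1.le, hr.2⟩)
  exact Real.rpow_le_rpow_of_exponent_ge hr.1 hr.2.le huv

-- mom x - mom (ρ x) ≤ (ρ-1) * x * momLog1 x
lemma mom_diff_le (hnn : ∀ r ∈ Set.Ico (0:ℝ) 1, 0 ≤ ω r)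
    (hint : IntegrableOn ω (Set.Ico 0 1)) {x δ : ℝ} (hx : 0 < x) (hδ : 0 ≤ δ) :
    mom ω x - mom ω (x + δ) ≤ δ * momLog1 ω x := by
  have h1 : mom ω x - mom ω (x+δ) = ∫ r in Set.Ioo (0:ℝ) 1, (r ^ x * ω r - r ^ (x+δ) * ω r) :=
    (integral_sub (int_mom hint hx.le) (int_mom hint (by linarith))).symm
  rw [h1, momLog1, ← integral_const_mul]
  refine setIntegral_mono_on
    ((int_mom hint hx.le).sub (int_mom hint (by linarith)))
    ((int_momlog hint hx).const_mul δ) measurableSet_Ioo ?_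
  intro r hr
  have hr0 := hr.1
  have hωr := hnn r ⟨hr.1.le, hr.2⟩
  have hrx : (0:ℝ) ≤ r ^ x := Real.rpow_nonneg hr.1.le x
  have hlog : 0 < Real.log (1/r) := log_inv_pos hr.1 hr.2
  have hsplit : r ^ (x+δ) = r ^ x * r ^ δ := Real.rpow_add hr0 x δ
  have hexp : 1 - δ * Real.log (1/r) ≤ r ^ δ := by
    have h2 : r ^ δ = Real.exp (-(δ * Real.log (1/r))) := by
      rw [Real.rpow_def_of_pos hr0]
      congr 1
      rw [Real.log_div one_ne_zero hr0.ne', Real.log_one]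
      ring
    rw [h2]
    linarith [Real.add_one_le_exp (-(δ * Real.log (1/r)))]
  have key : r ^ x - r ^ (x+δ) ≤ δ * (r ^ x * Real.log (1/r)) := by
    rw [hsplit]
    have h3 : r ^ x * (1 - δ * Real.log (1/r)) ≤ r ^ x * r ^ δ :=
      mul_le_mul_of_nonneg_left hexp hrx
    nlinarith
  calc r ^ x * ω r - r ^ (x+δ) * ω r = (r ^ x - r ^ (x+δ)) * ω r := by ring
    _ ≤ (δ * (r ^ x * Real.log (1/r))) * ω r := mul_le_mul_of_nonneg_right key hωr
    _ = δ * (r ^ x * Real.log (1/r) * ω r) := by ring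

-- mom (2x) ≤ s^x mom x + tail s
lemma mom_split (hnn : ∀ r ∈ Set.Ico (0:ℝ) 1, 0 ≤ ω r)
    (hint : IntegrableOn ω (Set.Ico 0 1)) {s x : ℝ} (hs0 : 0 < s) (hs1 : s < 1)
    (hx : 0 ≤ x) :
    mom ω (2*x) ≤ s ^ x * mom ω x + tailInt ω s := by
  have hsub1 : Set.Ioc (0:ℝ) s ⊆ Set.Ioo (0:ℝ) 1 := fun r hr => ⟨hr.1, lt_of_le_of_lt hr.2 hs1⟩
  have hsub2 : Set.Ioo s 1 ⊆ Set.Ioo (0:ℝ) 1 := fun r hr => ⟨lt_trans hs0 hr.1, hr.2⟩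
  have hunion : Set.Ioc (0:ℝ) s ∪ Set.Ioo s 1 = Set.Ioo (0:ℝ) 1 :=
    Set.Ioc_union_Ioo_eq_Ioo hs0.le hs1
  have hdisj : Disjoint (Set.Ioc (0:ℝ) s) (Set.Ioo s 1) := by
    refine Set.disjoint_left.2 (fun r hr hr' => ?_)
    exact absurd hr.2 (not_le.2 hr'.1)
  have hint2x := int_mom (ω := ω) hint (by linarith : (0:ℝ) ≤ 2*x)
  have hsplit : mom ω (2*x) = (∫ r in Set.Ioc (0:ℝ) s, r ^ (2*x) * ω r)
      + ∫ r in Set.Ioo s 1, r ^ (2*x) * ω r := by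
    rw [mom, ← hunion]
    exact setIntegral_union hdisj measurableSet_Ioo
      (hint2x.mono_set hsub1) (hint2x.mono_set hsub2)
  have hpart1 : (∫ r in Set.Ioc (0:ℝ) s, r ^ (2*x) * ω r) ≤ s ^ x * mom ω x := by
    have e1 : (∫ r in Set.Ioc (0:ℝ) s, r ^ (2*x) * ω r)
        ≤ ∫ r in Set.Ioc (0:ℝ) s, s ^ x * (r ^ x * ω r) := by
      refine setIntegral_mono_on (hint2x.mono_set hsub1)
        (((int_mom hint hx).mono_set hsub1).const_mul _) measurableSet_Ioc ?_
      intro r hr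
      have hωr := hnn r ⟨hr.1.le, lt_of_le_of_lt hr.2 hs1⟩
      have h2 : r ^ (2*x) = r ^ x * r ^ x := by
        rw [← Real.rpow_add hr.1]; ring_nf
      have h3 : r ^ x ≤ s ^ x := Real.rpow_le_rpow hr.1.le hr.2 hx
      have h4 : (0:ℝ) ≤ r ^ x := Real.rpow_nonneg hr.1.le x
      rw [h2]
      calc r ^ x * r ^ x * ω r ≤ s ^ x * r ^ x * ω r := by
            exact mul_le_mul_of_nonneg_right (mul_le_mul_of_nonneg_right h3 h4) hωr
        _ = s ^ x * (r ^ x * ω r) := by ring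
    have e2 : (∫ r in Set.Ioc (0:ℝ) s, s ^ x * (r ^ x * ω r))
        ≤ s ^ x * mom ω x := by
      rw [integral_const_mul]
      refine mul_le_mul_of_nonneg_left ?_ (Real.rpow_nonneg hs0.le x)
      refine setIntegral_mono_set (int_mom hint hx) ?_
        (HasSubset.Subset.eventuallyLE hsub1)
      filter_upwards [ae_restrict_mem measurableSet_Ioo] with r hr
      exact mul_nonneg (Real.rpow_nonneg hr.1.le x) (hnn r ⟨hr.1.le, hr.2⟩)
    linarith
  have hpart2 : (∫ r in Set.Ioo s 1, r ^ (2*x) * ω r) ≤ tailInt ω s := by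
    refine setIntegral_mono_on (hint2x.mono_set hsub2)
      ((int01 hint).mono_set hsub2) measurableSet_Ioo ?_
    intro r hr
    have hr0 : 0 < r := lt_trans hs0 hr.1
    have hωr := hnn r ⟨hr0.le, hr.2⟩
    have h1 : r ^ (2*x) ≤ 1 := Real.rpow_le_one hr0.le hr.2.le (by linarith)
    nlinarith [Real.rpow_nonneg hr0.le (2*x)]
  linarith

end dir2

section dir2main

variable {ω : ℝ → ℝ}

set_option maxHeartbeats 1600000 in
lemma dir2 (hnn : ∀ r ∈ Set.Ico (0:ℝ) 1, 0 ≤ ω r)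
    (hint : IntegrableOn ω (Set.Ico 0 1))
    (hpos : ∀ r ∈ Set.Ico (0:ℝ) 1, 0 < tailInt ω r)
    (hbd : Filter.IsBoundedUnder (· ≤ ·) Filter.atTop
      (fun x : ℝ => x * (momLog1 ω x / mom ω x))) :
    ∃ C : ℝ, 1 ≤ C ∧ ∀ r ∈ Set.Ico (0:ℝ) 1,
      tailInt ω r ≤ C * tailInt ω ((1 + r) / 2) := by
  obtain ⟨b, hb⟩ := hbd
  rw [Filter.eventually_map, Filter.eventually_atTop] at hb
  obtain ⟨x₀, hx₀⟩ := hb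
  set M : ℝ := max b 1 with hM
  clear_value M
  have hM1 : (1:ℝ) ≤ M := by rw [hM]; exact le_max_right _ _
  have hM0 : (0:ℝ) < M := by linarith
  set ρ : ℝ := 1 + 1/(2*M) with hρ
  clear_value ρ
  have hρ1 : 1 < ρ := by
    have : (0:ℝ) < 1/(2*M) := by positivity
    simp only [hρ]; linarith
  set x₁ : ℝ := max x₀ 2 with hx₁
  clear_value x₁
  have hx₁2 : (2:ℝ) ≤ x₁ := by rw [hx₁]; exact le_max_right _ _
  -- single step
  have hstep : ∀ x : ℝ, x₁ ≤ x → mom ω x ≤ 2 * mom ω (ρ * x) := by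
    intro x hx
    have hx0 : (0:ℝ) < x := by linarith
    have hmpos : 0 < mom ω x := mom_pos hnn hint hpos hx0.le
    have hdineq : x * momLog1 ω x ≤ M * mom ω x := by
      have hx₀x : x₀ ≤ x := le_trans (by rw [hx₁]; exact le_max_left _ _) hx
      have h1 := hx₀ x hx₀x
      have h2 : x * momLog1 ω x = (x * (momLog1 ω x / mom ω x)) * mom ω x := by
        field_simp
      rw [h2]
      have h3 : x * (momLog1 ω x / mom ω x) ≤ M := le_trans h1 (by rw [hM]; exact le_max_left _ _)
      exact mul_le_mul_of_nonneg_right h3 hmpos.le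
    have hδ : ρ * x = x + (ρ - 1) * x := by ring
    have hdiff : mom ω x - mom ω (ρ * x) ≤ (ρ-1) * x * momLog1 ω x := by
      rw [hδ]
      have := mom_diff_le hnn hint hx0 (by nlinarith [hρ1.le] : (0:ℝ) ≤ (ρ-1)*x)
      calc mom ω x - mom ω (x + (ρ-1)*x) ≤ ((ρ-1)*x) * momLog1 ω x := this
        _ = (ρ-1) * x * momLog1 ω x := by ring
    have hρ0 : 0 ≤ ρ - 1 := by linarith [hρ1.le]
    have hkey : (ρ-1) * (x * momLog1 ω x) ≤ (ρ-1) * (M * mom ω x) :=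
      mul_le_mul_of_nonneg_left hdineq hρ0
    have hval : (ρ-1) * M = 1/2 := by
      simp only [hρ]
      field_simp
      ring
    have h9 : (ρ-1) * (M * mom ω x) = (1/2) * mom ω x := by
      rw [← mul_assoc, hval]
    have h10 : (ρ-1) * x * momLog1 ω x = (ρ-1) * (x * momLog1 ω x) := by ring
    linarith [hkey, hdiff, h9, h10 ▸ hdiff]
  -- iterate
  have hiter : ∀ k : ℕ, ∀ x : ℝ, x₁ ≤ x → mom ω x ≤ 2^k * mom ω (ρ^k * x) := by
    intro k
    induction k with
    | zero => intro x hx; simp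
    | succ k ih =>
      intro x hx
      have h1 := hstep x hx
      have hρx : x₁ ≤ ρ * x := by nlinarith [hρ1.le]
      have h2 := ih (ρ * x) hρx
      have h3 : ρ^k * (ρ * x) = ρ^(k+1) * x := by ring
      rw [h3] at h2
      calc mom ω x ≤ 2 * mom ω (ρ * x) := h1
        _ ≤ 2 * (2^k * mom ω (ρ^(k+1) * x)) := by linarith
        _ = 2^(k+1) * mom ω (ρ^(k+1) * x) := by ring
  obtain ⟨k, hk⟩ := pow_unbounded_of_one_lt (2:ℝ) hρ1
  set D : ℝ := 2^k with hD
  clear_value D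
  have hD1 : (1:ℝ) ≤ D := by rw [hD]; exact one_le_pow₀ one_le_two
  have hdouble : ∀ x : ℝ, x₁ ≤ x → mom ω x ≤ D * mom ω (2*x) := by
    intro x hx
    have hx0 : (0:ℝ) < x := by linarith
    have h1 := hiter k x hx
    have h2 : mom ω (ρ^k * x) ≤ mom ω (2*x) := by
      refine mom_anti hnn hint (by linarith) ?_
      nlinarith [hk.le]
    calc mom ω x ≤ 2^k * mom ω (ρ^k * x) := h1
      _ ≤ D * mom ω (2*x) := by
          rw [hD]
          refine mul_le_mul_of_nonneg_left h2 (by positivity)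
  -- constants
  set a : ℝ := 2 * Real.log (2*D) with ha
  clear_value a
  have hlog2D : 0 < Real.log (2*D) := Real.log_pos (by linarith)
  have ha0 : 0 < a := by simp only [ha]; linarith
  have hexpa : Real.exp (a/2) = 2*D := by
    simp only [ha]
    rw [show (2 * Real.log (2*D))/2 = Real.log (2*D) by ring]
    exact Real.exp_log (by linarith)
  set r₂ : ℝ := max (1 - a/x₁) (1/2) with hr₂
  clear_value r₂
  have hr₂half : (1/2:ℝ) ≤ r₂ := by rw [hr₂]; exact le_max_right _ _
  have hr₂1 : r₂ < 1 := by
    have h1 : 1 - a/x₁ < 1 := by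
      have : 0 < a/x₁ := by positivity
      linarith
    simp only [hr₂]
    exact max_lt h1 (by norm_num)
  set s₂ : ℝ := (1 + r₂)/2 with hs₂
  clear_value s₂
  have hs₂mem : s₂ ∈ Set.Ico (0:ℝ) 1 := by
    constructor
    · simp only [hs₂]; linarith
    · simp only [hs₂]; linarith
  have hε : 0 < tailInt ω s₂ := hpos s₂ hs₂mem
  set C₂ : ℝ := 2 * D * Real.exp (2*a) with hC₂
  clear_value C₂
  set C₃ : ℝ := tailInt ω 0 / tailInt ω s₂ with hC₃
  clear_value C₃
  refine ⟨max 1 (max C₂ C₃), le_max_left _ _, ?_⟩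
  intro r hr
  set s : ℝ := (1 + r)/2 with hs
  clear_value s
  have hs0 : 0 < s := by simp only [hs]; linarith [hr.1]
  have hs1 : s < 1 := by simp only [hs]; linarith [hr.2]
  have htails : 0 ≤ tailInt ω s := tail_nonneg hnn hs0.le
  rcases le_or_gt r₂ r with hcase | hcase
  · -- large r
    have hrhalf : (1/2:ℝ) ≤ r := le_trans hr₂half hcase
    have hr0 : (0:ℝ) < r := by linarith
    have h1mr : 0 < 1 - r := by linarith [hr.2]
    set x : ℝ := a/(1-r) with hxdef
    clear_value x
    have hx0 : 0 < x := by rw [hxdef]; positivity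
    have hxx₁ : x₁ ≤ x := by
      have h1 : 1 - r ≤ a/x₁ := by
        have h2 : 1 - a/x₁ ≤ r₂ := by rw [hr₂]; exact le_max_left _ _
        linarith
      rw [hxdef, le_div_iff₀ h1mr]
      calc x₁ * (1-r) ≤ x₁ * (a/x₁) := by
            exact mul_le_mul_of_nonneg_left h1 (by linarith)
        _ = a := by field_simp
    have hx1r : x * (1-r) = a := by
      rw [hxdef]; field_simp
    have hmx : 0 < mom ω x := mom_pos hnn hint hpos hx0.le
    have hm2x : 0 < mom ω (2*x) := mom_pos hnn hint hpos (by linarith)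
    -- upper bound on tail r
    have hub : tailInt ω r ≤ mom ω x / r ^ x := by
      have := mom_lower hnn hint hr0.le hr.2 hx0.le
      rw [le_div_iff₀ (Real.rpow_pos_of_pos hr0 x)]
      linarith [this]
    -- s^x ≤ 1/(2D)
    have hsx : s ^ x ≤ 1/(2*D) := by
      have h1 : s ^ x = Real.exp (Real.log s * x) := Real.rpow_def_of_pos hs0 x
      have h2 : Real.log s ≤ s - 1 := by
        linarith [Real.log_le_sub_one_of_pos hs0]
      have h3 : s - 1 = -(1-r)/2 := by rw [hs]; ring
      have h4 : Real.log s * x ≤ -(a/2) := by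
        have h5 : Real.log s * x ≤ (-(1-r)/2) * x := by
          refine mul_le_mul_of_nonneg_right ?_ hx0.le
          linarith
        have h6 : (-(1-r)/2) * x = -(a/2) := by
          rw [← hx1r]; ring
        linarith
      have h7 : Real.exp (Real.log s * x) ≤ Real.exp (-(a/2)) := Real.exp_le_exp.2 h4
      have h8 : Real.exp (-(a/2)) = 1/(2*D) := by
        rw [Real.exp_neg, hexpa]
        field_simp
      rw [h1]; rw [h8] at h7; exact h7
    -- lower bound on tail s
    have hlb : mom ω x ≤ 2*D * tailInt ω s := by
      have h1 := mom_split hnn hint hs0 hs1 hx0.le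
      have h2 := hdouble x hxx₁
      have h3 : s ^ x * mom ω x ≤ (1/(2*D)) * (D * mom ω (2*x)) := by
        calc s ^ x * mom ω x ≤ (1/(2*D)) * mom ω x := by
              exact mul_le_mul_of_nonneg_right hsx hmx.le
          _ ≤ (1/(2*D)) * (D * mom ω (2*x)) := by
              refine mul_le_mul_of_nonneg_left h2 (by positivity)
      have h4 : (1/(2*D)) * (D * mom ω (2*x)) = mom ω (2*x)/2 := by
        field_simp
      -- mom 2x ≤ s^x mom x + tail s ≤ mom2x/2 + tail s
      have h5 : mom ω (2*x) ≤ mom ω (2*x)/2 + tailInt ω s := by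
        rw [h4] at h3; linarith
      have h6 : mom ω (2*x)/2 ≥ mom ω x / (2*D) := by
        rw [ge_iff_le, div_le_div_iff₀ (by positivity) (by norm_num)]
        nlinarith [h2]
      have h7 : mom ω x/(2*D) ≤ tailInt ω s := by linarith
      rw [div_le_iff₀ (by positivity : (0:ℝ) < 2*D)] at h7
      linarith [h7]
    -- r^x ≥ exp(-2a)
    have hrx : Real.exp (-(2*a)) ≤ r ^ x := by
      have h1 : r ^ x = Real.exp (Real.log r * x) := Real.rpow_def_of_pos hr0 x
      have h2 : -Real.log r ≤ 2*(1-r) := by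
        have h3 : Real.log r⁻¹ ≤ r⁻¹ - 1 := Real.log_le_sub_one_of_pos (by positivity)
        rw [Real.log_inv] at h3
        have h4 : r⁻¹ - 1 = (1-r)/r := by field_simp
        have h5 : (1-r)/r ≤ 2*(1-r) := by
          rw [div_le_iff₀ hr0]
          nlinarith
        linarith
      have h6 : -(2*a) ≤ Real.log r * x := by
        have h7 : (-(2*(1-r))) * x ≤ Real.log r * x := by
          refine mul_le_mul_of_nonneg_right ?_ hx0.le
          linarith
        have h8 : (-(2*(1-r))) * x = -(2*a) := by rw [← hx1r]; ring
        linarith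
      rw [h1]
      exact Real.exp_le_exp.2 h6
    have hfinal : tailInt ω r ≤ C₂ * tailInt ω s := by
      have h1 : mom ω x / r ^ x ≤ mom ω x * Real.exp (2*a) := by
        rw [div_le_iff₀ (Real.rpow_pos_of_pos hr0 x)]
        have h2 : Real.exp (2*a) * Real.exp (-(2*a)) = 1 := by
          rw [← Real.exp_add]; simp
        calc mom ω x = mom ω x * (Real.exp (2*a) * Real.exp (-(2*a))) := by rw [h2]; ring
          _ ≤ mom ω x * (Real.exp (2*a) * r ^ x) := by
              refine mul_le_mul_of_nonneg_left ?_ hmx.le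
              exact mul_le_mul_of_nonneg_left hrx (Real.exp_pos _).le
          _ = mom ω x * Real.exp (2*a) * r ^ x := by ring
      have h3 : mom ω x * Real.exp (2*a) ≤ (2*D*tailInt ω s) * Real.exp (2*a) :=
        mul_le_mul_of_nonneg_right hlb (Real.exp_pos _).le
      calc tailInt ω r ≤ mom ω x / r ^ x := hub
        _ ≤ mom ω x * Real.exp (2*a) := h1
        _ ≤ (2*D*tailInt ω s) * Real.exp (2*a) := h3
        _ = C₂ * tailInt ω s := by rw [hC₂]; ring
    calc tailInt ω r ≤ C₂ * tailInt ω s := hfinal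
      _ ≤ max 1 (max C₂ C₃) * tailInt ω s := by
          refine mul_le_mul_of_nonneg_right ?_ htails
          exact le_trans (le_max_left _ _) (le_max_right _ _)
  · -- small r
    have h1 : tailInt ω r ≤ tailInt ω 0 := tail_anti hnn hint le_rfl hr.1
    have h2 : tailInt ω s₂ ≤ tailInt ω s := by
      refine tail_anti hnn hint hs0.le ?_
      simp only [hs, hs₂]
      linarith [hcase.le]
    have h3 : tailInt ω r ≤ C₃ * tailInt ω s := by
      have h4 : C₃ * tailInt ω s₂ = tailInt ω 0 := by
        rw [hC₃]; field_simp
      calc tailInt ω r ≤ tailInt ω 0 := h1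
        _ = C₃ * tailInt ω s₂ := h4.symm
        _ ≤ C₃ * tailInt ω s := by
            refine mul_le_mul_of_nonneg_left h2 ?_
            rw [hC₃]
            exact div_nonneg (tail_nonneg hnn le_rfl) hε.le
    calc tailInt ω r ≤ C₃ * tailInt ω s := h3
      _ ≤ max 1 (max C₂ C₃) * tailInt ω s := by
          refine mul_le_mul_of_nonneg_right ?_ htails
          exact le_trans (le_max_right _ _) (le_max_right _ _)
end dir2main


/-- `ω ∈ D̂` iff `limsup_{x→∞} x L_ω'(x) < ∞` (i.e. `x L_ω'(x)` is eventually
bounded above), where `L_ω'(x) = (ω_(1))_x/ω_x`. -/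
theorem Dhat_iff_limsup_xLprime (ω : ℝ → ℝ)
    (hnn : ∀ r ∈ Set.Ico (0:ℝ) 1, 0 ≤ ω r)
    (hint : MeasureTheory.IntegrableOn ω (Set.Ico 0 1))
    (hpos : ∀ r ∈ Set.Ico (0:ℝ) 1, 0 < tailInt ω r) :
    (∃ C : ℝ, 1 ≤ C ∧ ∀ r ∈ Set.Ico (0:ℝ) 1,
        tailInt ω r ≤ C * tailInt ω ((1 + r) / 2))
      ↔ Filter.IsBoundedUnder (· ≤ ·) Filter.atTop
          (fun x : ℝ => x * (momLog1 ω x / mom ω x)) := by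
  constructor
  · rintro ⟨C, hC1, hdbl⟩
    exact dir1 hnn hint hpos hC1 hdbl
  · intro h
    exact dir2 hnn hint hpos h
end
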